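/- arXiv:2501.02514 — 8 statements merged into one kernel-verified Lean document; each statement's English description precedes it below -/
import Mathlib

section
/- If nonnegative random variables e_1,...,e_m satisfy the compound e-value condition Σ_{j∈[m]} E[e_j · 1{H_j true}] ≤ m, then the e-BH procedure at level α — which rejects the hypotheses whose e-values are among the k* largest, where k* = max{k : e_(k) ≥ m/(αk)} and e_(1) ≥ ... ≥ e_(m) are the sorted e-values — controls the false discovery rate at level α, i.e., E[(number of true nulls rejected)/(number of rejections ∨ 1)] ≤ α. -/
open MeasureTheory ProbabilityTheory Finset
open scoped ENNReal Classical

noncomputable section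

/-- `kstar S α e` is the largest `k` such that at least `k` of the e-values in `S`
are `≥ |S|/(α k)`, i.e. such that the `k`-th largest e-value `e_(k)` satisfies
`e_(k) ≥ |S|/(α k)`. -/
def kstar {ι : Type*} (S : Finset ι) (α : ℝ) (e : ι → ℝ) : ℕ :=
  sSup {k | k ≤ S.card ∧ k ≤ (S.filter (fun j => (S.card : ℝ) ≤ α * k * e j)).card}

/-- The e-BH rejection set: the hypotheses whose e-values are at least `|S|/(α k*)`,
equivalently those among the `k*` largest; when `k* = 0` nothing is rejected. -/
def eBHreject {ι : Type*} (S : Finset ι) (α : ℝ) (e : ι → ℝ) : Finset ι :=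
  S.filter (fun j => (S.card : ℝ) ≤ α * (kstar S α e) * e j)

/-!
The e-BH procedure is self-consistent: every rejected `j` has `e_j ≥ |S|/(α k*) ≥ |S|/(α |R|)`,
since at least `k*` hypotheses are rejected. Hence each rejected true null contributes
`1/|R| ≤ α e_j / |S|` to the false discovery proportion, which is therefore bounded pointwise by
`(α/m) Σ_{j true} e_j`. Taking expectations, the compound e-value condition bounds this by `α`.
-/

section eBH

variable {ι : Type*} (S : Finset ι) (α : ℝ) (e : ι → ℝ)

lemma kstar_le_card_eBHreject : kstar S α e ≤ (eBHreject S α e).card := by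
  have hmem : kstar S α e ∈
      {k | k ≤ S.card ∧ k ≤ (S.filter (fun j => (S.card : ℝ) ≤ α * k * e j)).card} :=
    Nat.sSup_mem ⟨0, by simp⟩ ⟨S.card, fun _ hk => hk.1⟩
  exact hmem.2

variable {S α e}

lemma card_le_mul_card_eBHreject_mul {j : ι} (hj : j ∈ eBHreject S α e) (hαe : 0 ≤ α * e j) :
    (S.card : ℝ) ≤ α * (eBHreject S α e).card * e j := by
  have hk : (kstar S α e : ℝ) ≤ (eBHreject S α e).card := by
    exact_mod_cast kstar_le_card_eBHreject S α e
  calc (S.card : ℝ) ≤ α * kstar S α e * e j := (mem_filter.mp hj).2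
    _ = α * e j * kstar S α e := by ring
    _ ≤ α * e j * (eBHreject S α e).card := mul_le_mul_of_nonneg_left hk hαe
    _ = α * (eBHreject S α e).card * e j := by ring

lemma inv_card_eBHreject_le {j : ι} (hj : j ∈ eBHreject S α e) (hαe : 0 ≤ α * e j) :
    ((eBHreject S α e).card : ℝ)⁻¹ ≤ α / S.card * e j := by
  have hR : (0 : ℝ) < (eBHreject S α e).card := by exact_mod_cast card_pos.mpr ⟨j, hj⟩
  have hS : (0 : ℝ) < S.card := by exact_mod_cast card_pos.mpr ⟨j, (mem_filter.mp hj).1⟩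
  rw [inv_le_iff_one_le_mul₀ hR]
  calc (1 : ℝ) = S.card / S.card := (div_self hS.ne').symm
    _ ≤ α * (eBHreject S α e).card * e j / S.card := by
        gcongr; exact card_le_mul_card_eBHreject_mul hj hαe
    _ = α / S.card * e j * (eBHreject S α e).card := by ring

lemma fdp_eBHreject_le (hα : 0 ≤ α) (he : ∀ j ∈ S, 0 ≤ e j) (p : ι → Prop) [DecidablePred p] :
    (((eBHreject S α e).filter p).card : ℝ) / ((max (eBHreject S α e).card 1 : ℕ) : ℝ)
      ≤ α / S.card * ∑ j ∈ S.filter p, e j := by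
  set R := eBHreject S α e
  have hαe : ∀ j ∈ S, 0 ≤ α / S.card * e j := fun j hj =>
    mul_nonneg (div_nonneg hα S.card.cast_nonneg) (he j hj)
  rcases R.eq_empty_or_nonempty with hR | hR
  · simp only [hR, filter_empty, card_empty, Nat.cast_zero, zero_div, mul_sum]
    exact sum_nonneg fun j hj => hαe j (mem_filter.mp hj).1
  have hRS : R.filter p ⊆ S.filter p := filter_subset_filter p (filter_subset _ S)
  rw [max_eq_left (card_pos.mpr hR), div_eq_mul_inv, ← nsmul_eq_mul, ← sum_const, mul_sum]
  calc ∑ _j ∈ R.filter p, (R.card : ℝ)⁻¹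
      ≤ ∑ j ∈ R.filter p, α / S.card * e j := sum_le_sum fun j hj => by
        have hjR := (mem_filter.mp hj).1
        exact inv_card_eBHreject_le hjR (mul_nonneg hα (he j (mem_filter.mp hjR).1))
    _ ≤ ∑ j ∈ S.filter p, α / S.card * e j :=
        sum_le_sum_of_subset_of_nonneg hRS fun j hj _ => hαe j (mem_filter.mp hj).1

end eBH

theorem ebh_fdr_control_general {Ω : Type*} [MeasurableSpace Ω] (μ : Measure Ω)
    (m : ℕ) (α : ℝ) (hα : 0 < α)
    (e : Fin m → Ω → ℝ) (truth : Fin m → Prop)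
    (hint : ∀ j, Integrable (e j) μ)
    (hnn : ∀ j ω, 0 ≤ e j ω)
    (hcompound : ∑ j : Fin m, ∫ ω, e j ω * (if truth j then (1 : ℝ) else 0) ∂μ ≤ m) :
    ∫ ω, (((eBHreject (Finset.univ : Finset (Fin m)) α fun j => e j ω).filter
            (fun j => truth j)).card : ℝ)
        / ((max (eBHreject (Finset.univ : Finset (Fin m)) α fun j => e j ω).card 1 : ℕ) : ℝ) ∂μ
      ≤ α := by
  have hcompound_filter : ∑ j ∈ univ.filter truth, ∫ ω, e j ω ∂μ ≤ m := by
    refine le_of_eq_of_le ?_ hcompound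
    rw [sum_filter]
    refine sum_congr rfl fun j _ => ?_
    split_ifs <;> simp
  have hbound_int : Integrable (fun ω => α / m * ∑ j ∈ univ.filter truth, e j ω) μ :=
    (integrable_finsetSum _ fun j _ => hint j).const_mul _
  calc _ ≤ ∫ ω, α / m * ∑ j ∈ univ.filter truth, e j ω ∂μ := by
        refine integral_mono_of_nonneg (.of_forall fun ω => by positivity) hbound_int
          (.of_forall fun ω => ?_)
        simpa using fdp_eBHreject_le (S := univ) hα.le (fun j _ => hnn j ω) truth
    _ = α / m * ∑ j ∈ univ.filter truth, ∫ ω, e j ω ∂μ := by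
        rw [integral_const_mul, integral_finsetSum _ fun j _ => hint j]
    _ ≤ α / m * m := mul_le_mul_of_nonneg_left hcompound_filter (by positivity)
    _ ≤ α := by
        rcases m.eq_zero_or_pos with rfl | hm
        · simpa using hα.le
        · rw [div_mul_cancel₀ _ (by positivity)]

/-- if nonnegative random variables `e_1,…,e_m` satisfy the compound
e-value condition `Σ_j E[e_j · 1{H_j true}] ≤ m`, then the e-BH procedure at level `α`
controls the false discovery rate at level `α`. -/
theorem ebh_fdr_control {Ω : Type*} [MeasurableSpace Ω] (μ : Measure Ω)
    [IsProbabilityMeasure μ] (m : ℕ) (α : ℝ) (hα : 0 < α)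
    (e : Fin m → Ω → ℝ) (truth : Fin m → Prop)
    (hmeas : ∀ j, Measurable (e j)) (hint : ∀ j, Integrable (e j) μ)
    (hnn : ∀ j ω, 0 ≤ e j ω)
    (hcompound : ∑ j : Fin m, ∫ ω, e j ω * (if truth j then (1 : ℝ) else 0) ∂μ ≤ m) :
    ∫ ω, (((eBHreject (Finset.univ : Finset (Fin m)) α fun j => e j ω).filter
            (fun j => truth j)).card : ℝ)
        / ((max (eBHreject (Finset.univ : Finset (Fin m)) α fun j => e j ω).card 1 : ℕ) : ℝ) ∂μ
      ≤ α :=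
  ebh_fdr_control_general μ m α hα e truth hint hnn hcompound
end
end

section
/- For the e-BH procedure applied to nonnegative values e_1,...,e_m at level α with rejection set R_eBH, the following deterministic inequality holds: FDP = (Σ_{j=1}^m 1{e_j ≥ m/(α|R_eBH|), H_j true}) / (|R_eBH| ∨ 1) ≤ (α/m) · Σ_{j=1}^m e_j · 1{H_j true}. -/
/-!
A counting form of Markov's inequality applied to the null e-values: every counted null has
`e_j ≥ m / (α |R|)`, so there are at most `α |R| / m · ∑_{H_j true} e_j` of them, and dividing
by `|R| ∨ 1` gives the bound.
-/

open MeasureTheory Finset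
open scoped Classical

noncomputable section

theorem mul_card_filter_le_sum {ι : Type*} (s : Finset ι) (f : ι → ℝ)
    (hf : ∀ i ∈ s, 0 ≤ f i) (c : ℝ) :
    c * #(s.filter (fun i => c ≤ f i)) ≤ ∑ i ∈ s, f i := by
  calc c * #(s.filter (fun i => c ≤ f i))
      ≤ ∑ i ∈ s.filter (fun i => c ≤ f i), f i := by
        simpa [nsmul_eq_mul, mul_comm] using
          card_nsmul_le_sum _ f c fun i hi => (mem_filter.1 hi).2
    _ ≤ ∑ i ∈ s, f i :=
        sum_le_sum_of_subset_of_nonneg (filter_subset _ _) fun i hi _ => hf i hi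

theorem mul_card_filter_le_mul_sum {ι : Type*} (s : Finset ι) (f : ι → ℝ)
    (hf : ∀ i ∈ s, 0 ≤ f i) (b : ℝ) {a : ℝ} (ha : 0 ≤ a) :
    b * #(s.filter (fun i => b ≤ a * f i)) ≤ a * ∑ i ∈ s, f i := by
  rw [mul_sum]
  exact mul_card_filter_le_sum s (fun i => a * f i) (fun i hi => mul_nonneg ha (hf i hi)) b

theorem div_max_one_le_of_mul_le {t m r : ℕ} {α S : ℝ} (hα : 0 ≤ α) (hS : 0 ≤ S)
    (htm : t ≤ m) (h : m * t ≤ α * r * S) :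
    (t : ℝ) / (max r 1 : ℕ) ≤ α / m * S := by
  rcases Nat.eq_zero_or_pos m with rfl | hm
  · simp [Nat.le_zero.1 htm]
  rcases Nat.eq_zero_or_pos r with rfl | hr
  · have ht : t = 0 := by
      have : (m : ℝ) * t ≤ 0 := by simpa using h
      exact_mod_cast (nonpos_of_mul_nonpos_right this (by exact_mod_cast hm)).antisymm t.cast_nonneg
    simp only [ht, CharP.cast_eq_zero, zero_div]
    positivity
  rw [Nat.max_eq_left hr, div_le_iff₀ (by exact_mod_cast hr), div_mul_eq_mul_div,
    div_mul_eq_mul_div, le_div_iff₀ (by exact_mod_cast hm)]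
  linarith

/-- deterministic FDP bound for the e-BH procedure:
`FDP = #{j : e_j ≥ m/(α |R|), H_j true} / (|R| ∨ 1) ≤ (α/m) · Σ_j e_j · 1{H_j true}`. -/
theorem ebh_fdp_deterministic_bound (m : ℕ) (α : ℝ) (hα : 0 < α)
    (e : Fin m → ℝ) (hnn : ∀ j, 0 ≤ e j) (truth : Fin m → Prop) :
    ((Finset.univ.filter (fun j : Fin m =>
        (m : ℝ) ≤ α * ((eBHreject (Finset.univ : Finset (Fin m)) α e).card : ℝ) * e j
          ∧ truth j)).card : ℝ)
      / ((max (eBHreject (Finset.univ : Finset (Fin m)) α e).card 1 : ℕ) : ℝ)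
    ≤ α / m * ∑ j : Fin m, e j * (if truth j then (1 : ℝ) else 0) := by
  set r := #(eBHreject (univ : Finset (Fin m)) α e)
  have hnull_sum : ∑ j : Fin m, e j * (if truth j then (1 : ℝ) else 0)
      = ∑ j ∈ univ.filter truth, e j := by
    simp only [mul_ite, mul_one, mul_zero, sum_filter]
  have hcount : univ.filter (fun j => (m : ℝ) ≤ α * r * e j ∧ truth j)
      = (univ.filter truth).filter (fun j => (m : ℝ) ≤ α * r * e j) := by
    rw [filter_filter]
    simp only [and_comm]
  rw [hnull_sum, hcount]
  refine div_max_one_le_of_mul_le hα.le (sum_nonneg fun j _ => hnn j)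
    ((card_le_univ _).trans_eq (Fintype.card_fin m)) ?_
  exact mul_card_filter_le_mul_sum _ e (fun j _ => hnn j) m (by positivity)
end
end

section
/- Let V_0, V_1, ..., V_K be exchangeable random variables and let T be a random threshold that is invariant under any permutation of (V_0, V_1, ..., V_K). Then E[ 1{V_0 < T} / (1 + Σ_{k=1}^K 1{V_k < T}) ] ≤ 1/(K+1). Consequently (K+1) · 1{V_0 < T} / (1 + Σ_{k=1}^K 1{V_k < T}) is an e-value. -/
/-!
Write `S(v)` for the number of coordinates of `v` below the symmetric threshold `f v`. The shares
`1{v k < f v} / S(v)` of the `K + 1` coordinates sum to at most one (to zero when `S(v) = 0`), and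
exchangeability together with the symmetry of `f` makes their expectations all equal; hence each
has expectation at most `1 / (K + 1)`. When `V 0` is below the threshold, `S = 1 + Σ_{k ≠ 0} …`,
so the share of coordinate `0` is exactly the integrand of the theorem.
-/

open MeasureTheory ProbabilityTheory Finset
open scoped Classical

noncomputable section

namespace ExchangeableThreshold

variable {ι : Type*}

theorem integral_comp_perm_of_map_eq {Ω : Type*} [MeasurableSpace Ω] {μ : Measure Ω}
    {V : ι → Ω → ℝ} (hmeas : ∀ k, Measurable (V k)) {σ : Equiv.Perm ι}
    (hσ : μ.map (fun ω k => V (σ k) ω) = μ.map (fun ω k => V k ω))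
    {g : (ι → ℝ) → ℝ} (hg : Measurable g) :
    ∫ ω, g (fun k => V (σ k) ω) ∂μ = ∫ ω, g (fun k => V k ω) ∂μ := by
  rw [← integral_map (measurable_pi_lambda _ fun k => hmeas (σ k)).aemeasurable
      hg.aestronglyMeasurable, hσ,
    integral_map (measurable_pi_lambda _ hmeas).aemeasurable hg.aestronglyMeasurable]

variable [Fintype ι]

def thresholdShare (f : (ι → ℝ) → ℝ) (k : ι) (v : ι → ℝ) : ℝ :=
  (if v k < f v then 1 else 0) / ∑ l, if v l < f v then 1 else 0

theorem thresholdShare_nonneg (f : (ι → ℝ) → ℝ) (k : ι) (v : ι → ℝ) :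
    0 ≤ thresholdShare f k v :=
  div_nonneg (by positivity) (sum_nonneg fun _ _ => by positivity)

theorem sum_thresholdShare_le_one (f : (ι → ℝ) → ℝ) (v : ι → ℝ) :
    ∑ k, thresholdShare f k v ≤ 1 := by
  simp only [thresholdShare, ← sum_div]
  exact div_self_le_one _

theorem thresholdShare_le_one (f : (ι → ℝ) → ℝ) (k : ι) (v : ι → ℝ) :
    thresholdShare f k v ≤ 1 :=
  (single_le_sum (fun j _ => thresholdShare_nonneg f j v) (mem_univ k)).trans
    (sum_thresholdShare_le_one f v)

theorem measurable_thresholdShare {f : (ι → ℝ) → ℝ} (hf : Measurable f) (k : ι) :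
    Measurable (thresholdShare f k) := by
  have hind : ∀ l, Measurable fun v : ι → ℝ => if v l < f v then (1 : ℝ) else 0 := fun l =>
    Measurable.ite (measurableSet_lt (measurable_pi_apply l) hf) measurable_const
      measurable_const
  exact (hind k).div (Finset.measurable_sum _ fun l _ => hind l)

theorem thresholdShare_comp_perm {f : (ι → ℝ) → ℝ}
    (hsym : ∀ (σ : Equiv.Perm ι) (v : ι → ℝ), f (fun k => v (σ k)) = f v)
    (σ : Equiv.Perm ι) (k : ι) (v : ι → ℝ) :
    thresholdShare f k (fun j => v (σ j)) = thresholdShare f (σ k) v := by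
  simp only [thresholdShare, hsym σ v]
  rw [Equiv.sum_comp σ fun l => if v l < f v then (1 : ℝ) else 0]

theorem thresholdShare_eq_div_one_add_sum [DecidableEq ι] (f : (ι → ℝ) → ℝ) (i : ι)
    (v : ι → ℝ) :
    (if v i < f v then (1 : ℝ) else 0)
        / (1 + ∑ k ∈ univ.filter (fun k => k ≠ i), if v k < f v then (1 : ℝ) else 0)
      = thresholdShare f i v := by
  by_cases h : v i < f v
  · rw [thresholdShare, ← add_sum_erase _ _ (mem_univ i), filter_ne', if_pos h]
  · simp only [thresholdShare, if_neg h, zero_div]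

theorem card_mul_integral_thresholdShare_le_one {Ω : Type*} [MeasurableSpace Ω]
    {μ : Measure Ω} [IsProbabilityMeasure μ] {V : ι → Ω → ℝ} (hmeas : ∀ k, Measurable (V k))
    (hexch : ∀ σ : Equiv.Perm ι,
      μ.map (fun ω k => V (σ k) ω) = μ.map (fun ω k => V k ω))
    {f : (ι → ℝ) → ℝ} (hf : Measurable f)
    (hsym : ∀ (σ : Equiv.Perm ι) (v : ι → ℝ), f (fun k => v (σ k)) = f v) (i : ι) :
    Fintype.card ι * ∫ ω, thresholdShare f i (fun k => V k ω) ∂μ ≤ 1 := by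
  have hint : ∀ j, Integrable (fun ω => thresholdShare f j (fun k => V k ω)) μ := fun j =>
    Integrable.of_bound
      ((measurable_thresholdShare hf j).comp (measurable_pi_lambda _ hmeas)).aestronglyMeasurable
      1 (ae_of_all _ fun ω => by
        rw [Real.norm_of_nonneg (thresholdShare_nonneg _ _ _)]
        exact thresholdShare_le_one _ _ _)
  have hequal : ∀ j, ∫ ω, thresholdShare f j (fun k => V k ω) ∂μ
      = ∫ ω, thresholdShare f i (fun k => V k ω) ∂μ := fun j => by
    rw [← integral_comp_perm_of_map_eq hmeas (hexch (Equiv.swap i j))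
      (measurable_thresholdShare hf j)]
    refine integral_congr_ae (ae_of_all _ fun ω => ?_)
    exact (thresholdShare_comp_perm hsym (Equiv.swap i j) j (fun k => V k ω)).trans
      (by rw [Equiv.swap_apply_right])
  calc Fintype.card ι * ∫ ω, thresholdShare f i (fun k => V k ω) ∂μ
      = ∑ j, ∫ ω, thresholdShare f j (fun k => V k ω) ∂μ := by
        simp only [hequal, sum_const, card_univ, nsmul_eq_mul]
    _ = ∫ ω, ∑ j, thresholdShare f j (fun k => V k ω) ∂μ :=
        (integral_finsetSum _ fun j _ => hint j).symm
    _ ≤ ∫ _, (1 : ℝ) ∂μ :=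
        integral_mono (integrable_finsetSum _ fun j _ => hint j) (integrable_const 1)
          fun ω => sum_thresholdShare_le_one f _
    _ = 1 := by simp

end ExchangeableThreshold

open ExchangeableThreshold in
/-- if `V_0, …, V_K` are exchangeable and `T = f(V_0,…,V_K)` is a
permutation-invariant threshold, then
`E[1{V_0 < T} / (1 + Σ_{k=1}^K 1{V_k < T})] ≤ 1/(K+1)`, and consequently
`(K+1)·1{V_0 < T}/(1 + Σ_{k=1}^K 1{V_k < T})` is an e-value. -/
theorem exchangeable_threshold_evalue {Ω : Type*} [MeasurableSpace Ω]
    (μ : Measure Ω) [IsProbabilityMeasure μ] (K : ℕ)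
    (V : Fin (K + 1) → Ω → ℝ) (hmeas : ∀ k, Measurable (V k))
    (hexch : ∀ σ : Equiv.Perm (Fin (K + 1)),
      Measure.map (fun ω => fun k => V (σ k) ω) μ = Measure.map (fun ω => fun k => V k ω) μ)
    (f : (Fin (K + 1) → ℝ) → ℝ) (hf : Measurable f)
    (hsym : ∀ (σ : Equiv.Perm (Fin (K + 1))) (v : Fin (K + 1) → ℝ),
      f (fun k => v (σ k)) = f v) :
    (∫ ω, (if V 0 ω < f (fun k => V k ω) then (1 : ℝ) else 0)
        / (1 + ∑ k ∈ Finset.univ.filter (fun k : Fin (K + 1) => k ≠ 0),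
            (if V k ω < f (fun k' => V k' ω) then (1 : ℝ) else 0)) ∂μ)
      ≤ 1 / (K + 1)
    ∧ (∫ ω, (K + 1 : ℝ) * ((if V 0 ω < f (fun k => V k ω) then (1 : ℝ) else 0)
        / (1 + ∑ k ∈ Finset.univ.filter (fun k : Fin (K + 1) => k ≠ 0),
            (if V k ω < f (fun k' => V k' ω) then (1 : ℝ) else 0))) ∂μ)
      ≤ 1 := by
  have hmain := card_mul_integral_thresholdShare_le_one hmeas hexch hf hsym 0
  simp only [Fintype.card_fin, Nat.cast_add, Nat.cast_one] at hmain
  have hshare : ∀ ω, (if V 0 ω < f (fun k => V k ω) then (1 : ℝ) else 0)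
      / (1 + ∑ k ∈ Finset.univ.filter (fun k : Fin (K + 1) => k ≠ 0),
          (if V k ω < f (fun k' => V k' ω) then (1 : ℝ) else 0))
      = thresholdShare f 0 (fun k => V k ω) := fun ω =>
    thresholdShare_eq_div_one_add_sum f 0 (fun k => V k ω)
  simp only [hshare, integral_const_mul]
  exact ⟨by rw [le_div_iff₀ (by positivity), mul_comm]; exact hmain, hmain⟩
end
end

section
/- Replacement property of the stopping time: if the event {V̂_{K+j,i} < T_j and Y_{K+j,i} ≤ C_{K+j,i}} holds, then T_j equals the oracle threshold T̃_{j,i}, where T̃_{j,i} is defined by the same sup-formula as T_j but with the numerator of the FDP estimate augmented by the extra term 1{V̂_{K+j,i} < t, Y_{K+j,i} ≤ C_{K+j,i}} in place of the '+1'. -/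
/-!
Replacing `+1` by the indicator `b(t) ≤ 1` can only lower the FDP estimate, so the oracle level
set contains the original one and `T_j ≤ T̃_{j,i}`. Above `V̂_{K+j,i}` the indicator of the null
test point equals `1`, so there the two level sets agree; since `V̂_{K+j,i} < T_j`, a point of the
oracle set beyond `T_j` would lie in the original set, which is impossible.
-/

open Finset
open scoped Classical

noncomputable section

theorem csSup_eq_csSup_of_subset_of_inter_Ioi_subset {α : Type*} [ConditionallyCompleteLinearOrder α]
    {s t : Set α} {a : α} (hst : s ⊆ t) (hs : s.Nonempty) (ht : BddAbove t)
    (hts : t ∩ Set.Ioi a ⊆ s) (ha : a < sSup s) : sSup s = sSup t := by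
  refine le_antisymm (csSup_le_csSup ht hs hst) (csSup_le (hs.mono hst) fun x hx => ?_)
  by_contra! hlt
  exact (le_csSup (ht.mono hst) (hts ⟨hx, ha.trans hlt⟩)).not_gt hlt

theorem stopping_time_replacement_general (K : ℕ) {ι : Type*} [Fintype ι]
    (Vcal : Fin K → ℝ) (nullcal : Fin K → Prop) (Vtest : ℝ) (nulltest : Prop)
    (Wtest : ι → ℝ) (c α' : ℝ) (hc : 0 < c)
    (hne : {t : ℝ |
        ((∑ k : Fin K, (if Vcal k < t ∧ nullcal k then (1 : ℝ) else 0)) + 1)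
          / ((max 1 (Finset.univ.filter fun l : ι => Wtest l < t).card : ℕ) : ℝ) * c
        ≤ α'}.Nonempty)
    (hbdd : BddAbove {t : ℝ |
        ((∑ k : Fin K, (if Vcal k < t ∧ nullcal k then (1 : ℝ) else 0))
            + (if Vtest < t ∧ nulltest then (1 : ℝ) else 0))
          / ((max 1 (Finset.univ.filter fun l : ι => Wtest l < t).card : ℕ) : ℝ) * c
        ≤ α'})
    (hreject : Vtest < sSup {t : ℝ |
        ((∑ k : Fin K, (if Vcal k < t ∧ nullcal k then (1 : ℝ) else 0)) + 1)
          / ((max 1 (Finset.univ.filter fun l : ι => Wtest l < t).card : ℕ) : ℝ) * c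
        ≤ α'})
    (hnull : nulltest) :
    sSup {t : ℝ |
        ((∑ k : Fin K, (if Vcal k < t ∧ nullcal k then (1 : ℝ) else 0)) + 1)
          / ((max 1 (Finset.univ.filter fun l : ι => Wtest l < t).card : ℕ) : ℝ) * c
        ≤ α'}
      = sSup {t : ℝ |
        ((∑ k : Fin K, (if Vcal k < t ∧ nullcal k then (1 : ℝ) else 0))
            + (if Vtest < t ∧ nulltest then (1 : ℝ) else 0))
          / ((max 1 (Finset.univ.filter fun l : ι => Wtest l < t).card : ℕ) : ℝ) * c
        ≤ α'} := by
  refine csSup_eq_csSup_of_subset_of_inter_Ioi_subset ?_ hne hbdd ?_ hreject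
  · intro t ht
    refine le_trans ?_ (Set.mem_ofPred.mp ht)
    gcongr
    exact ite_le_one le_rfl zero_le_one
  · rintro t ⟨ht, hVt : Vtest < t⟩
    simpa [hVt, hnull] using ht

/-- replacement property of the stopping time. With
`FDP̂(t) = ((Σ_k a_k(t) + 1)/D(t))·c` and `FDP̃(t) = ((Σ_k a_k(t) + b(t))/D(t))·c`,
where `a_k(t) = 1{V̂_k < t, null_k}`, `b(t) = 1{V̂_test < t, null_test}`,
`D(t) = 1 ∨ #{test scores < t}`, and `T = sup{t : FDP̂(t) ≤ α̃}`,
`T̃ = sup{t : FDP̃(t) ≤ α̃}`: if `V̂_test < T` and the test null holds, then `T = T̃`. -/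
theorem stopping_time_replacement (K : ℕ) {ι : Type*} [Fintype ι]
    (Vcal : Fin K → ℝ) (nullcal : Fin K → Prop) (Vtest : ℝ) (nulltest : Prop)
    (Wtest : ι → ℝ) (c α' : ℝ) (hc : 0 < c) (hα' : 0 < α')
    (hne : {t : ℝ |
        ((∑ k : Fin K, (if Vcal k < t ∧ nullcal k then (1 : ℝ) else 0)) + 1)
          / ((max 1 (Finset.univ.filter fun l : ι => Wtest l < t).card : ℕ) : ℝ) * c
        ≤ α'}.Nonempty)
    (hbdd : BddAbove {t : ℝ |
        ((∑ k : Fin K, (if Vcal k < t ∧ nullcal k then (1 : ℝ) else 0))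
            + (if Vtest < t ∧ nulltest then (1 : ℝ) else 0))
          / ((max 1 (Finset.univ.filter fun l : ι => Wtest l < t).card : ℕ) : ℝ) * c
        ≤ α'})
    (hreject : Vtest < sSup {t : ℝ |
        ((∑ k : Fin K, (if Vcal k < t ∧ nullcal k then (1 : ℝ) else 0)) + 1)
          / ((max 1 (Finset.univ.filter fun l : ι => Wtest l < t).card : ℕ) : ℝ) * c
        ≤ α'})
    (hnull : nulltest) :
    sSup {t : ℝ |
        ((∑ k : Fin K, (if Vcal k < t ∧ nullcal k then (1 : ℝ) else 0)) + 1)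
          / ((max 1 (Finset.univ.filter fun l : ι => Wtest l < t).card : ℕ) : ℝ) * c
        ≤ α'}
      = sSup {t : ℝ |
        ((∑ k : Fin K, (if Vcal k < t ∧ nullcal k then (1 : ℝ) else 0))
            + (if Vtest < t ∧ nulltest then (1 : ℝ) else 0))
          / ((max 1 (Finset.univ.filter fun l : ι => Wtest l < t).card : ℕ) : ℝ) * c
        ≤ α'} :=
  stopping_time_replacement_general K Vcal nullcal Vtest nulltest Wtest c α' hc hne hbdd hreject
    hnull

end
end

section
/- Hierarchical conformal p-values are valid: under hierarchical exchangeability and a score s monotone nondecreasing in y, the p-value p_{j,i} = (Σ_{k=1}^K (1/N_k) Σ_{i'=1}^{N_k} 1{V_{k,i'} ≤ V̂_{K+j,i}} + 1)/(K+1) satisfies P(p_{j,i} ≤ α and Y_{K+j,i} ≤ C_{K+j,i}) ≤ α for every α ∈ (0,1). -/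
/-!
Write `V̂` for the score of the test point at its cutoff and `S` for the `K + 1` groups formed by
the calibration groups and the test group. Since `Y ≤ C` gives `V ≤ V̂`, it suffices to bound the
probability that the p-value of the true score `V` is `≤ α`. Give every point of a group of size
`n` the weight `1 / n` and compute, for each group `g ∈ S`, the weighted fraction of its points
whose p-value against the other groups of `S` is `≤ α`. The p-value of a point is at least its
weighted rank among all points of `S` divided by `K + 1`, so a max argument bounds the sum of these
fractions over `g ∈ S` by `α (K + 1)` for every data set. Exchangeability within the test group
makes the probability for point `i` equal to the expected fraction for the test group, and
exchangeability of the groups makes that expectation the same for every `g ∈ S`; it is therefore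
at most `α`.
-/

open MeasureTheory ProbabilityTheory Finset
open scoped ENNReal Classical

noncomputable section

def extSeq (m : ℕ) (σ : Equiv.Perm (Fin m)) : ℕ → ℕ :=
  fun i => if h : i < m then ((σ ⟨i, h⟩ : Fin m) : ℕ) else i

namespace HierarchicalConformal

theorem sum_filter_weighted_rank_le {ι α : Type*} [LinearOrder α] (s : Finset ι) {w : ι → ℝ}
    (hw : ∀ j ∈ s, 0 ≤ w j) (v : ι → α) {τ : ℝ} (hτ : 0 ≤ τ) :
    ∑ j ∈ s with ∑ l ∈ s with v l ≤ v j, w l ≤ τ, w j ≤ τ := by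
  set T := s.filter fun j => ∑ l ∈ s with v l ≤ v j, w l ≤ τ
  rcases T.eq_empty_or_nonempty with hT | hT
  · rwa [hT, sum_empty]
  obtain ⟨j₀, hj₀, hmax⟩ := T.exists_max_image v hT
  calc ∑ j ∈ T, w j ≤ ∑ l ∈ s with v l ≤ v j₀, w l :=
        sum_le_sum_of_subset_of_nonneg
          (fun j hj => mem_filter.2 ⟨(mem_filter.1 hj).1, hmax j hj⟩)
          (fun l hl _ => hw l (mem_filter.1 hl).1)
    _ ≤ τ := (mem_filter.1 hj₀).2

theorem lintegral_le_lintegral_of_forall_fiber {Ω β : Type*} [MeasurableSpace Ω]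
    [MeasurableSpace β] [Countable β] [MeasurableSingletonClass β] {μ : Measure Ω} {f : Ω → β}
    (hf : Measurable f) {g h : Ω → ℝ≥0∞}
    (hgh : ∀ b, ∫⁻ x in f ⁻¹' {b}, g x ∂μ ≤ ∫⁻ x in f ⁻¹' {b}, h x ∂μ) :
    ∫⁻ x, g x ∂μ ≤ ∫⁻ x, h x ∂μ := by
  have hfiber (φ : Ω → ℝ≥0∞) : ∫⁻ x, φ x ∂μ = ∑' b, ∫⁻ x in f ⁻¹' {b}, φ x ∂μ := by
    rw [← lintegral_iUnion (fun b => hf (measurableSet_singleton b)) (pairwise_disjoint_fiber f),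
      ← Set.preimage_iUnion, Set.iUnion_of_singleton, Set.preimage_univ, Measure.restrict_univ]
  rw [hfiber g, hfiber h]
  exact ENNReal.tsum_le_tsum hgh

theorem map_invariant_of_semiconj {Ω D E : Type*} [MeasurableSpace Ω] [MeasurableSpace D]
    [MeasurableSpace E] {μ : Measure Ω} {Φ : Ω → D} {F : D → E} {T : D → D} {T' : E → E}
    (hΦ : Measurable Φ) (hF : Measurable F) (hT : Measurable T) (hT' : Measurable T')
    (hFT : Function.Semiconj F T T') (h : μ.map (T ∘ Φ) = μ.map Φ) :
    (μ.map (F ∘ Φ)).map T' = μ.map (F ∘ Φ) := by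
  rw [Measure.map_map hT' (hF.comp hΦ), ← Function.comp_assoc, ← hFT.comp_eq,
    Function.comp_assoc, ← Measure.map_map hF (hT.comp hΦ), h, Measure.map_map hF hΦ]

-- A group is its size `n` with the sequence of its scores, of which only the first `n` count.
def groupCdf (u : ℕ × (ℕ → ℝ)) (x : ℝ) : ℝ :=
  1 / (u.1 : ℝ) * ∑ l ∈ range u.1, if u.2 l ≤ x then (1 : ℝ) else 0

theorem groupCdf_eq_sum_filter (u : ℕ × (ℕ → ℝ)) (x : ℝ) :
    groupCdf u x = ∑ l ∈ range u.1 with u.2 l ≤ x, 1 / (u.1 : ℝ) := by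
  rw [groupCdf, sum_filter, mul_sum]
  simp only [mul_ite, mul_one, mul_zero]

theorem groupCdf_nonneg (u : ℕ × (ℕ → ℝ)) (x : ℝ) : 0 ≤ groupCdf u x := by
  rw [groupCdf_eq_sum_filter]
  exact sum_nonneg fun _ _ => by positivity

theorem groupCdf_le_one (u : ℕ × (ℕ → ℝ)) (x : ℝ) : groupCdf u x ≤ 1 := by
  rw [groupCdf_eq_sum_filter]
  calc ∑ l ∈ range u.1 with u.2 l ≤ x, 1 / (u.1 : ℝ)
      ≤ ∑ l ∈ range u.1, 1 / (u.1 : ℝ) :=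
        sum_le_sum_of_subset_of_nonneg (filter_subset _ _) fun _ _ _ => by positivity
    _ ≤ 1 := by
        rw [sum_const, card_range, nsmul_eq_mul]
        rcases eq_or_ne (u.1 : ℝ) 0 with h | h
        · simp [h]
        · rw [mul_one_div_cancel h]

theorem groupCdf_mono (u : ℕ × (ℕ → ℝ)) : Monotone (groupCdf u) := fun x y hxy => by
  simp only [groupCdf_eq_sum_filter]
  exact sum_le_sum_of_subset_of_nonneg
    (monotone_filter_right _ fun _ _ h => h.trans hxy) fun _ _ _ => by positivity

theorem measurable_groupCdf : Measurable (Function.uncurry groupCdf) := by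
  change Measurable fun p : (ℕ × (ℕ → ℝ)) × ℝ => groupCdf p.1 p.2
  have : Measurable fun q : ((ℕ → ℝ) × ℝ) × ℕ => groupCdf (q.2, q.1.1) q.1.2 :=
    measurable_from_prod_countable_left fun n => show Measurable fun q : (ℕ → ℝ) × ℝ =>
      1 / (n : ℝ) * ∑ l ∈ range n, (if q.1 l ≤ q.2 then (1 : ℝ) else 0) from
      (Finset.measurable_sum _ fun l _ =>
      Measurable.ite (measurableSet_le ((measurable_pi_apply l).comp measurable_fst) measurable_snd)
        measurable_const measurable_const).const_mul _
  exact this.comp ((measurable_fst.snd.prodMk measurable_snd).prodMk measurable_fst.fst)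

theorem ofReal_groupCdf (u : ℕ × (ℕ → ℝ)) (x : ℝ) :
    ENNReal.ofReal (groupCdf u x) =
      (u.1 : ℝ≥0∞)⁻¹ * ∑ l ∈ range u.1, if u.2 l ≤ x then 1 else 0 := by
  rcases Nat.eq_zero_or_pos u.1 with hu | hu
  · simp [groupCdf, hu]
  rw [groupCdf, ENNReal.ofReal_mul (by positivity), one_div,
    ENNReal.ofReal_inv_of_pos (by exact_mod_cast hu), ENNReal.ofReal_natCast,
    ENNReal.ofReal_sum_of_nonneg fun _ _ => by positivity]
  simp only [apply_ite ENNReal.ofReal, ENNReal.ofReal_one, ENNReal.ofReal_zero]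

variable {ι : Type*}

theorem sum_groupCdf_eq_sum_sigma (S : Finset ι) (d : ι → ℕ × (ℕ → ℝ)) (x : ℝ) :
    ∑ g ∈ S, groupCdf (d g) x =
      ∑ q ∈ S.sigma (fun g => range (d g).1) with (d q.1).2 q.2 ≤ x, 1 / ((d q.1).1 : ℝ) := by
  rw [sum_filter, sum_sigma]
  simp only [groupCdf_eq_sum_filter, sum_filter]

def applyScore {β : Type*} (f : β → ℝ) (d : ι → ℕ × (ℕ → β)) : ι → ℕ × (ℕ → ℝ) :=
  fun l => ((d l).1, fun i => f ((d l).2 i))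

theorem measurable_applyScore {β : Type*} [MeasurableSpace β] {f : β → ℝ} (hf : Measurable f) :
    Measurable (applyScore f : (ι → ℕ × (ℕ → β)) → _) :=
  measurable_pi_lambda _ fun l => (measurable_pi_apply l).fst.prodMk
    (measurable_pi_lambda _ fun i =>
      hf.comp ((measurable_pi_apply i).comp (measurable_pi_apply l).snd))

theorem measurableSet_size_eq {β : Type*} [MeasurableSpace β] (t : ι) (m : ℕ) :
    MeasurableSet {d : ι → ℕ × (ℕ → β) | (d t).1 = m} :=
  (measurable_pi_apply t).fst (measurableSet_singleton m)

theorem measurable_comp_perm {β : Type*} [MeasurableSpace β] (σ : Equiv.Perm ι) :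
    Measurable fun d : ι → β => d ∘ σ :=
  measurable_pi_lambda _ fun k => measurable_pi_apply (σ k)

variable [DecidableEq ι]

def pValue (S : Finset ι) (t : ι) (d : ι → ℕ × (ℕ → ℝ)) (x : ℝ) : ℝ :=
  (∑ g ∈ S.erase t, groupCdf (d g) x + 1) / #S

def pValueFraction (S : Finset ι) (t : ι) (α : ℝ) (d : ι → ℕ × (ℕ → ℝ)) : ℝ :=
  groupCdf ((d t).1, fun i => pValue S t d ((d t).2 i)) α

theorem pValue_mono (S : Finset ι) (t : ι) (d : ι → ℕ × (ℕ → ℝ)) : Monotone (pValue S t d) :=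
  fun _ _ hxy => div_le_div_of_nonneg_right
    (add_le_add_left (sum_le_sum fun _ _ => groupCdf_mono _ hxy) _) (Nat.cast_nonneg _)

theorem sum_groupCdf_le_of_pValue_le {S : Finset ι} {t : ι} (ht : t ∈ S)
    {d : ι → ℕ × (ℕ → ℝ)} {x α : ℝ} (h : pValue S t d x ≤ α) :
    ∑ g ∈ S, groupCdf (d g) x ≤ α * #S := by
  have hS : (0 : ℝ) < #S := by exact_mod_cast card_pos.2 ⟨t, ht⟩
  rw [pValue, div_le_iff₀ hS] at h
  rw [← add_sum_erase S _ ht]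
  linarith [groupCdf_le_one (d t) x]

theorem sum_pValueFraction_le (S : Finset ι) (d : ι → ℕ × (ℕ → ℝ)) {α : ℝ} (hα : 0 ≤ α) :
    ∑ g ∈ S, pValueFraction S g α d ≤ α * #S := by
  set w : (Σ _ : ι, ℕ) → ℝ := fun q => 1 / ((d q.1).1 : ℝ)
  set v : (Σ _ : ι, ℕ) → ℝ := fun q => (d q.1).2 q.2
  set T := S.sigma fun g => range (d g).1
  calc ∑ g ∈ S, pValueFraction S g α d
      ≤ ∑ g ∈ S, ∑ l ∈ range (d g).1 with
          ∑ q ∈ T with v q ≤ v ⟨g, l⟩, w q ≤ α * #S, w ⟨g, l⟩ := by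
        refine sum_le_sum fun g hg => ?_
        rw [pValueFraction, groupCdf_eq_sum_filter]
        refine sum_le_sum_of_subset_of_nonneg (monotone_filter_right _ fun l _ hl => ?_)
          fun _ _ _ => by positivity
        rw [← sum_groupCdf_eq_sum_sigma]
        exact sum_groupCdf_le_of_pValue_le hg hl
    _ = ∑ q ∈ T with ∑ q' ∈ T with v q' ≤ v q, w q' ≤ α * #S, w q := by
        rw [sum_filter, sum_sigma]
        simp only [sum_filter]
    _ ≤ α * #S :=
        sum_filter_weighted_rank_le T (fun _ _ => by positivity) v (by positivity)

def permuteWithin {β : Type*} (k : ι) (π : ℕ → ℕ) (d : ι → ℕ × (ℕ → β)) :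
    ι → ℕ × (ℕ → β) :=
  fun l => ((d l).1, fun i => (d l).2 (if l = k then π i else i))

theorem measurable_permuteWithin {β : Type*} [MeasurableSpace β] (k : ι) (π : ℕ → ℕ) :
    Measurable (permuteWithin k π : (ι → ℕ × (ℕ → β)) → _) :=
  measurable_pi_lambda _ fun l => (measurable_pi_apply l).fst.prodMk
    (measurable_pi_lambda _ fun _ => (measurable_pi_apply _).comp (measurable_pi_apply l).snd)

theorem measurable_pValue (S : Finset ι) (t : ι) {x : (ι → ℕ × (ℕ → ℝ)) → ℝ}
    (hx : Measurable x) : Measurable fun d => pValue S t d (x d) :=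
  ((Finset.measurable_sum _ fun g _ =>
    measurable_groupCdf.comp ((measurable_pi_apply g).prodMk hx)).add_const 1).div_const _

theorem measurable_pValueFraction (S : Finset ι) (t : ι) (α : ℝ) :
    Measurable (pValueFraction S t α) :=
  measurable_groupCdf.comp (((measurable_pi_apply t).fst.prodMk (measurable_pi_lambda _ fun _ =>
    measurable_pValue S t ((measurable_pi_apply _).comp (measurable_pi_apply t).snd))).prodMk
      measurable_const)

theorem measurableSet_pValue_le (S : Finset ι) (t : ι) (α : ℝ) (i : ℕ) :
    MeasurableSet {d : ι → ℕ × (ℕ → ℝ) | pValue S t d ((d t).2 i) ≤ α} :=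
  measurableSet_le (measurable_pValue S t (x := fun d => (d t).2 i)
    ((measurable_pi_apply i).comp (measurable_pi_apply t).snd)) measurable_const

theorem measurableSet_lt_and_pValue_le (S : Finset ι) (t : ι) (α : ℝ) (i : ℕ) :
    MeasurableSet {d : ι → ℕ × (ℕ → ℝ) | i < (d t).1 ∧ pValue S t d ((d t).2 i) ≤ α} := by
  rw [Set.ofPred_and]
  exact (measurableSet_lt measurable_const (measurable_pi_apply t).fst).inter
    (measurableSet_pValue_le S t α i)

theorem pValue_permuteWithin (S : Finset ι) (t : ι) (π : ℕ → ℕ) (d : ι → ℕ × (ℕ → ℝ)) :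
    pValue S t (permuteWithin t π d) = pValue S t d := by
  funext x
  refine congrArg (· / _) (congrArg (· + 1) (sum_congr rfl fun g hg => ?_))
  simp [permuteWithin, ne_of_mem_erase hg]

theorem pValue_comp_swap {S : Finset ι} {g t : ι} (hg : g ∈ S) (ht : t ∈ S)
    (d : ι → ℕ × (ℕ → ℝ)) : pValue S t (d ∘ Equiv.swap g t) = pValue S g d := by
  funext x
  refine congrArg (· / _) (congrArg (· + 1)
    (sum_equiv (Equiv.swap g t) (fun h => ?_) fun _ _ => rfl))
  rw [mem_erase, mem_erase, Equiv.swap_apply_def]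
  grind

theorem pValueFraction_comp_swap {S : Finset ι} {g t : ι} (hg : g ∈ S) (ht : t ∈ S) (α : ℝ)
    (d : ι → ℕ × (ℕ → ℝ)) :
    pValueFraction S t α (d ∘ Equiv.swap g t) = pValueFraction S g α d := by
  simp [pValueFraction, pValue_comp_swap hg ht]

section Exchangeable

variable {P : Measure (ι → ℕ × (ℕ → ℝ))} {S : Finset ι} {t : ι} {α : ℝ}

theorem restrict_pValue_le_eq {m : ℕ}
    (hwithin : ∀ σ : Equiv.Perm (Fin m),
      (P.restrict {d | (d t).1 = m}).map (permuteWithin t (extSeq m σ)) =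
        P.restrict {d | (d t).1 = m})
    {i i' : ℕ} (hi : i < m) (hi' : i' < m) :
    P.restrict {d | (d t).1 = m} {d | pValue S t d ((d t).2 i) ≤ α} =
      P.restrict {d | (d t).1 = m} {d | pValue S t d ((d t).2 i') ≤ α} := by
  set σ := Equiv.swap (⟨i, hi⟩ : Fin m) ⟨i', hi'⟩
  have hpre : permuteWithin t (extSeq m σ) ⁻¹' {d | pValue S t d ((d t).2 i) ≤ α} =
      {d | pValue S t d ((d t).2 i') ≤ α} := by
    ext d
    simp [pValue_permuteWithin, permuteWithin, extSeq, hi, σ]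
  calc _ = (P.restrict {d | (d t).1 = m}).map (permuteWithin t (extSeq m σ))
        {d | pValue S t d ((d t).2 i) ≤ α} := by rw [hwithin σ]
    _ = _ := by
      rw [Measure.map_apply (measurable_permuteWithin t _) (measurableSet_pValue_le S t α i), hpre]

theorem setLIntegral_pValueFraction (m : ℕ) :
    ∫⁻ d in {d | (d t).1 = m}, ENNReal.ofReal (pValueFraction S t α d) ∂P =
      (m : ℝ≥0∞)⁻¹ * ∑ i ∈ range m,
        P.restrict {d | (d t).1 = m} {d | pValue S t d ((d t).2 i) ≤ α} := by
  have hE := measurableSet_pValue_le S t α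
  calc _ = ∫⁻ d in {d | (d t).1 = m}, (m : ℝ≥0∞)⁻¹ *
        ∑ i ∈ range m, {d | pValue S t d ((d t).2 i) ≤ α}.indicator 1 d ∂P := by
        refine setLIntegral_congr_fun (measurableSet_size_eq t m) fun d (hd : (d t).1 = m) => ?_
        simp only [pValueFraction, ofReal_groupCdf, hd, Set.indicator_apply, Set.mem_ofPred_eq,
          Pi.one_apply]
    _ = _ := by
        rw [lintegral_const_mul _ (Finset.measurable_sum _ fun i _ =>
            measurable_one.indicator (hE i)),
          lintegral_finsetSum _ fun i _ => measurable_one.indicator (hE i)]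
        simp_rw [lintegral_indicator_one (hE _)]

theorem measure_pValue_le_le_lintegral
    (hwithin : ∀ (m : ℕ) (σ : Equiv.Perm (Fin m)),
      (P.restrict {d | (d t).1 = m}).map (permuteWithin t (extSeq m σ)) =
        P.restrict {d | (d t).1 = m})
    (i : ℕ) :
    P {d | i < (d t).1 ∧ pValue S t d ((d t).2 i) ≤ α} ≤
      ∫⁻ d, ENNReal.ofReal (pValueFraction S t α d) ∂P := by
  have hA := measurableSet_lt_and_pValue_le S t α i
  rw [← lintegral_indicator_one hA]
  refine lintegral_le_lintegral_of_forall_fiber (measurable_pi_apply t).fst fun m => ?_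
  change ∫⁻ d in {d | (d t).1 = m}, _ ∂P ≤ ∫⁻ d in {d | (d t).1 = m}, _ ∂P
  rw [lintegral_indicator_one hA, setLIntegral_pValueFraction]
  rcases lt_or_ge i m with him | hmi
  · rw [sum_congr rfl fun i' hi' => restrict_pValue_le_eq (hwithin m) (mem_range.1 hi') him,
      sum_const, card_range, nsmul_eq_mul, ← mul_assoc,
      ENNReal.inv_mul_cancel (by simp; omega) (ENNReal.natCast_ne_top m), one_mul]
    exact measure_mono fun d hd => hd.2
  · have hempty : {d | i < (d t).1 ∧ pValue S t d ((d t).2 i) ≤ α} ∩ {d | (d t).1 = m} = ∅ := by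
      ext d
      simp only [Set.mem_inter_iff, Set.mem_ofPred_eq, Set.mem_empty_iff_false, iff_false]
      omega
    rw [Measure.restrict_apply hA, hempty, measure_empty]
    exact zero_le

theorem lintegral_pValueFraction_eq (hgroup : ∀ σ : Equiv.Perm ι, P.map (fun d => d ∘ σ) = P)
    {g : ι} (hg : g ∈ S) (ht : t ∈ S) :
    ∫⁻ d, ENNReal.ofReal (pValueFraction S g α d) ∂P =
      ∫⁻ d, ENNReal.ofReal (pValueFraction S t α d) ∂P := by
  conv_rhs => rw [← hgroup (Equiv.swap g t)]
  rw [lintegral_map (measurable_pValueFraction S t α).ennreal_ofReal (measurable_comp_perm _)]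
  simp_rw [pValueFraction_comp_swap hg ht]

theorem card_mul_lintegral_pValueFraction_le [IsProbabilityMeasure P]
    (hgroup : ∀ σ : Equiv.Perm ι, P.map (fun d => d ∘ σ) = P) (ht : t ∈ S) (hα : 0 ≤ α) :
    #S * ∫⁻ d, ENNReal.ofReal (pValueFraction S t α d) ∂P ≤ #S * ENNReal.ofReal α :=
  calc (#S : ℝ≥0∞) * ∫⁻ d, ENNReal.ofReal (pValueFraction S t α d) ∂P
      = ∑ g ∈ S, ∫⁻ d, ENNReal.ofReal (pValueFraction S g α d) ∂P := by
        rw [sum_congr rfl fun g hg => lintegral_pValueFraction_eq hgroup hg ht, sum_const,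
          nsmul_eq_mul]
    _ = ∫⁻ d, ∑ g ∈ S, ENNReal.ofReal (pValueFraction S g α d) ∂P :=
        (lintegral_finsetSum _ fun g _ => (measurable_pValueFraction S g α).ennreal_ofReal).symm
    _ ≤ ∫⁻ _, ENNReal.ofReal (α * #S) ∂P := lintegral_mono fun d => by
        rw [← ENNReal.ofReal_sum_of_nonneg (f := fun g => pValueFraction S g α d) fun _ _ =>
          groupCdf_nonneg _ _]
        exact ENNReal.ofReal_le_ofReal (sum_pValueFraction_le S d hα)
    _ = #S * ENNReal.ofReal α := by
        rw [lintegral_const, measure_univ, mul_one, ENNReal.ofReal_mul hα,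
          ENNReal.ofReal_natCast, mul_comm]

theorem measure_pValue_le [IsProbabilityMeasure P]
    (hgroup : ∀ σ : Equiv.Perm ι, P.map (fun d => d ∘ σ) = P)
    (hwithin : ∀ (m : ℕ) (σ : Equiv.Perm (Fin m)),
      (P.restrict {d | (d t).1 = m}).map (permuteWithin t (extSeq m σ)) =
        P.restrict {d | (d t).1 = m})
    (ht : t ∈ S) (hα : 0 ≤ α) (i : ℕ) :
    P {d | i < (d t).1 ∧ pValue S t d ((d t).2 i) ≤ α} ≤ ENNReal.ofReal α :=
  (measure_pValue_le_le_lintegral hwithin i).trans <|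
    (ENNReal.mul_le_mul_iff_right (Nat.cast_ne_zero.2 (card_ne_zero_of_mem ht))
      (ENNReal.natCast_ne_top _)).1
      (card_mul_lintegral_pValueFraction_le hgroup ht hα)

end Exchangeable

theorem pValue_insert_natAdd {K M : ℕ} (j : Fin M) (d : Fin (K + M) → ℕ × (ℕ → ℝ)) (x : ℝ) :
    pValue (insert (Fin.natAdd K j) (univ.map (Fin.castAddEmb M))) (Fin.natAdd K j) d x =
      (∑ k : Fin K, groupCdf (d (Fin.castAdd M k)) x + 1) / (K + 1) := by
  have hj : Fin.natAdd K j ∉ univ.map (Fin.castAddEmb M) := by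
    simp only [mem_map, mem_univ, true_and, Fin.ext_iff, not_exists]
    intro k
    simp only [Fin.coe_castAddEmb, Fin.val_castAdd, Fin.val_natAdd]
    omega
  rw [pValue, erase_insert hj, card_insert_of_notMem hj, sum_map, card_map, card_univ,
    Fintype.card_fin]
  push_cast
  rfl

end HierarchicalConformal

open HierarchicalConformal

theorem hierarchical_conformal_pvalue_valid_general
    {Ω 𝒳 : Type*} [MeasurableSpace Ω] [MeasurableSpace 𝒳]
    (μ : Measure Ω) [IsProbabilityMeasure μ] (K M : ℕ)
    (N : Fin (K + M) → Ω → ℕ) (X : Fin (K + M) → ℕ → Ω → 𝒳) (Y : Fin (K + M) → ℕ → Ω → ℝ)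
    (hNmeas : ∀ k, Measurable (N k))
    (hXmeas : ∀ k i, Measurable (X k i)) (hYmeas : ∀ k i, Measurable (Y k i))
    (hgroup : ∀ σ : Equiv.Perm (Fin (K + M)),
      Measure.map (fun ω => fun k => (N (σ k) ω, fun i => (X (σ k) i ω, Y (σ k) i ω))) μ
        = Measure.map (fun ω => fun k => (N k ω, fun i => (X k i ω, Y k i ω))) μ)
    (hwithin : ∀ (k : Fin (K + M)) (m : ℕ) (σ : Equiv.Perm (Fin m)),
      Measure.map (fun ω => fun l => (N l ω,
          fun i => (X l (if l = k then extSeq m σ i else i) ω,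
                    Y l (if l = k then extSeq m σ i else i) ω)))
          (μ.restrict {ω | N k ω = m})
        = Measure.map (fun ω => fun l => (N l ω, fun i => (X l i ω, Y l i ω)))
          (μ.restrict {ω | N k ω = m}))
    -- score and cutoff; the score is nondecreasing in its second argument
    (s : 𝒳 → ℝ → ℝ) (c : 𝒳 → ℝ)
    (hs : Measurable fun p : 𝒳 × ℝ => s p.1 p.2)
    (hmono : ∀ x y₁ y₂, y₁ ≤ y₂ → s x y₁ ≤ s x y₂)
    (j : Fin M) (i : ℕ) (α : ℝ) (hα : 0 < α ∧ α < 1) :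
    μ {ω |
        ((∑ k : Fin K, (1 / (N (Fin.castAdd M k) ω : ℝ)) *
            ∑ i' ∈ Finset.range (N (Fin.castAdd M k) ω),
              (if s (X (Fin.castAdd M k) i' ω) (Y (Fin.castAdd M k) i' ω)
                  ≤ s (X (Fin.natAdd K j) i ω) (c (X (Fin.natAdd K j) i ω))
                then (1 : ℝ) else 0)) + 1) / (K + 1) ≤ α
        ∧ Y (Fin.natAdd K j) i ω ≤ c (X (Fin.natAdd K j) i ω)
        ∧ i < N (Fin.natAdd K j) ω}
      ≤ ENNReal.ofReal α := by
  set t := Fin.natAdd K j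
  set S : Finset (Fin (K + M)) := insert t (univ.map (Fin.castAddEmb M))
  set Φ : Ω → (Fin (K + M) → ℕ × (ℕ → 𝒳 × ℝ)) := fun ω k => (N k ω, fun i => (X k i ω, Y k i ω))
  have hΦ : Measurable Φ := measurable_pi_lambda _ fun k => (hNmeas k).prodMk
    (measurable_pi_lambda _ fun i => (hXmeas k i).prodMk (hYmeas k i))
  set ψ := applyScore (fun p : 𝒳 × ℝ => s p.1 p.2) ∘ Φ
  have hψ : Measurable ψ := (measurable_applyScore hs).comp hΦ
  have hgroup' (σ : Equiv.Perm (Fin (K + M))) : (μ.map ψ).map (fun d => d ∘ σ) = μ.map ψ :=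
    map_invariant_of_semiconj hΦ (measurable_applyScore hs) (measurable_comp_perm σ)
      (measurable_comp_perm σ) (fun _ => rfl) (hgroup σ)
  have hwithin' (m : ℕ) (σ : Equiv.Perm (Fin m)) :
      ((μ.map ψ).restrict {d | (d t).1 = m}).map (permuteWithin t (extSeq m σ)) =
        (μ.map ψ).restrict {d | (d t).1 = m} := by
    rw [Measure.restrict_map hψ (measurableSet_size_eq t m)]
    exact map_invariant_of_semiconj hΦ (measurable_applyScore hs) (measurable_permuteWithin t _)
      (measurable_permuteWithin t _) (fun _ => rfl) (hwithin t m σ)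
  have : IsProbabilityMeasure (μ.map ψ) := Measure.isProbabilityMeasure_map hψ.aemeasurable
  calc _ ≤ μ (ψ ⁻¹' {d | i < (d t).1 ∧ pValue S t d ((d t).2 i) ≤ α}) := by
        refine measure_mono fun ω ⟨hp, hY, hi⟩ =>
          ⟨hi, (pValue_mono S t _ (hmono _ _ _ hY)).trans ?_⟩
        rw [pValue_insert_natAdd]
        exact hp
    _ = μ.map ψ {d | i < (d t).1 ∧ pValue S t d ((d t).2 i) ≤ α} :=
        (Measure.map_apply hψ (measurableSet_lt_and_pValue_le S t α i)).symm
    _ ≤ ENNReal.ofReal α :=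
        measure_pValue_le hgroup' hwithin' (mem_insert_self _ _) hα.1.le i

/-- hierarchical conformal p-values are valid. Under hierarchical
exchangeability and a score `s(x,y)` nondecreasing in `y`, the p-value
`p_{j,i} = (Σ_{k=1}^K (1/N_k) Σ_{i'} 1{V_{k,i'} ≤ V̂_{K+j,i}} + 1)/(K+1)` satisfies
`P(p_{j,i} ≤ α and Y_{K+j,i} ≤ C_{K+j,i}) ≤ α` for every `α ∈ (0,1)`. -/
theorem hierarchical_conformal_pvalue_valid
    {Ω 𝒳 : Type*} [MeasurableSpace Ω] [MeasurableSpace 𝒳]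
    (μ : Measure Ω) [IsProbabilityMeasure μ] (K M : ℕ)
    (N : Fin (K + M) → Ω → ℕ) (X : Fin (K + M) → ℕ → Ω → 𝒳) (Y : Fin (K + M) → ℕ → Ω → ℝ)
    (hNpos : ∀ k ω, 0 < N k ω) (hNmeas : ∀ k, Measurable (N k))
    (hXmeas : ∀ k i, Measurable (X k i)) (hYmeas : ∀ k i, Measurable (Y k i))
    (hgroup : ∀ σ : Equiv.Perm (Fin (K + M)),
      Measure.map (fun ω => fun k => (N (σ k) ω, fun i => (X (σ k) i ω, Y (σ k) i ω))) μ
        = Measure.map (fun ω => fun k => (N k ω, fun i => (X k i ω, Y k i ω))) μ)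
    (hwithin : ∀ (k : Fin (K + M)) (m : ℕ) (σ : Equiv.Perm (Fin m)),
      Measure.map (fun ω => fun l => (N l ω,
          fun i => (X l (if l = k then extSeq m σ i else i) ω,
                    Y l (if l = k then extSeq m σ i else i) ω)))
          (μ.restrict {ω | N k ω = m})
        = Measure.map (fun ω => fun l => (N l ω, fun i => (X l i ω, Y l i ω)))
          (μ.restrict {ω | N k ω = m}))
    (hNindep : ∀ k : Fin (K + M), IndepFun (N k)
        (fun ω => ((fun i => (X k i ω, Y k i ω)),
          fun l : {l : Fin (K + M) // l ≠ k} => (N (l : Fin (K + M)) ω,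
            fun i => (X (l : Fin (K + M)) i ω, Y (l : Fin (K + M)) i ω)))) μ)
    -- score and cutoff; the score is nondecreasing in its second argument
    (s : 𝒳 → ℝ → ℝ) (c : 𝒳 → ℝ)
    (hs : Measurable fun p : 𝒳 × ℝ => s p.1 p.2) (hc : Measurable c)
    (hmono : ∀ x y₁ y₂, y₁ ≤ y₂ → s x y₁ ≤ s x y₂)
    (j : Fin M) (i : ℕ) (α : ℝ) (hα : 0 < α ∧ α < 1) :
    μ {ω |
        ((∑ k : Fin K, (1 / (N (Fin.castAdd M k) ω : ℝ)) *
            ∑ i' ∈ Finset.range (N (Fin.castAdd M k) ω),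
              (if s (X (Fin.castAdd M k) i' ω) (Y (Fin.castAdd M k) i' ω)
                  ≤ s (X (Fin.natAdd K j) i ω) (c (X (Fin.natAdd K j) i ω))
                then (1 : ℝ) else 0)) + 1) / (K + 1) ≤ α
        ∧ Y (Fin.natAdd K j) i ω ≤ c (X (Fin.natAdd K j) i ω)
        ∧ i < N (Fin.natAdd K j) ω}
      ≤ ENNReal.ofReal α :=
  hierarchical_conformal_pvalue_valid_general μ K M N X Y hNmeas hXmeas hYmeas hgroup hwithin s c hs
    hmono j i α hα
end
end

section
/- Sandwich inequality for group-weighted e-values: let Z̃_0, Z̃_1, ..., Z̃_K be exchangeable random vectors (with exchangeable coordinates given group sizes, group sizes independent of values), let T̃ be a statistic invariant to permutations of the groups and within groups, and for each group k define W_k = (1/N_k) Σ_{i'=1}^{N_k} 1{A_{k,i'}(T̃)} where A_{k,i'}(t) is a measurable event determined by Z_{k,i'} and t. Then E[ W_0 / (Σ_{k=1}^K W_k + W_0) ] ≤ 1/(K+1), where 0/0 := 0. -/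
open MeasureTheory ProbabilityTheory Finset
open scoped Classical

noncomputable section

section Exchangeable

variable {ι α : Type*} [MeasurableSpace α]

lemma measurable_comp_perm (σ : Equiv.Perm ι) : Measurable fun (v : ι → α) k => v (σ k) :=
  measurable_pi_lambda _ fun k => measurable_pi_apply (σ k)

variable [Fintype ι]

lemma div_sum_le_one {w : ι → ℝ} (hw : ∀ k, 0 ≤ w k) (k : ι) : w k / ∑ l, w l ≤ 1 :=
  div_le_one_of_le₀ (single_le_sum (fun l _ => hw l) (mem_univ k)) (sum_nonneg fun l _ => hw l)

lemma sum_div_sum_le_one (w : ι → ℝ) : ∑ k, w k / ∑ l, w l ≤ 1 := by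
  rw [← sum_div]
  exact div_self_le_one _

lemma measurable_div_sum {X : Type*} [MeasurableSpace X] {W : ι → X → ℝ}
    (hmeas : ∀ k, Measurable (W k)) (k : ι) : Measurable fun x => W k x / ∑ l, W l x :=
  (hmeas k).div (measurable_sum _ fun l _ => hmeas l)

lemma integrable_div_sum {X : Type*} [MeasurableSpace X] {ν : Measure X} [IsFiniteMeasure ν]
    {W : ι → X → ℝ} (hmeas : ∀ k, Measurable (W k)) (hnonneg : ∀ k x, 0 ≤ W k x) (k : ι) :
    Integrable (fun x => W k x / ∑ l, W l x) ν := by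
  refine .of_bound (measurable_div_sum hmeas k).aestronglyMeasurable 1 (.of_forall fun x => ?_)
  rw [Real.norm_of_nonneg (div_nonneg (hnonneg k x) (sum_nonneg fun l _ => hnonneg l x))]
  exact div_sum_le_one (hnonneg · x) k

lemma integral_div_sum_le_inv_card {X : Type*} [MeasurableSpace X] {ν : Measure X}
    [IsProbabilityMeasure ν] {W : ι → X → ℝ} (hmeas : ∀ k, Measurable (W k))
    (hnonneg : ∀ k x, 0 ≤ W k x)
    (hequal : ∀ j k, ∫ x, W j x / ∑ l, W l x ∂ν = ∫ x, W k x / ∑ l, W l x ∂ν) (k : ι) :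
    ∫ x, W k x / ∑ l, W l x ∂ν ≤ 1 / Fintype.card ι := by
  have hcard : (0 : ℝ) < Fintype.card ι := by
    have : Nonempty ι := ⟨k⟩
    exact_mod_cast Fintype.card_pos
  rw [le_div_iff₀' hcard]
  calc (Fintype.card ι : ℝ) * ∫ x, W k x / ∑ l, W l x ∂ν
      = ∑ j, ∫ x, W j x / ∑ l, W l x ∂ν := by
        rw [sum_congr rfl fun j _ => hequal j k, sum_const, card_univ, nsmul_eq_mul]
    _ = ∫ x, ∑ j, W j x / ∑ l, W l x ∂ν :=
        (integral_finsetSum _ fun j _ => integrable_div_sum hmeas hnonneg j).symm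
    _ ≤ ∫ _, (1 : ℝ) ∂ν :=
        integral_mono (integrable_finsetSum _ fun j _ => integrable_div_sum hmeas hnonneg j)
          (integrable_const 1) fun x => sum_div_sum_le_one (W · x)
    _ = 1 := by simp

lemma integral_div_sum_eq_of_exchangeable {ν : Measure (ι → α)}
    (hν : ∀ σ : Equiv.Perm ι, ν.map (fun v k => v (σ k)) = ν) {W : ι → (ι → α) → ℝ}
    (hmeas : ∀ k, Measurable (W k))
    (hequiv : ∀ (σ : Equiv.Perm ι) j v, W j (fun l => v (σ l)) = W (σ j) v) (j k : ι) :
    ∫ v, W j v / ∑ l, W l v ∂ν = ∫ v, W k v / ∑ l, W l v ∂ν := by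
  let σ := Equiv.swap k j
  calc ∫ v, W j v / ∑ l, W l v ∂ν
      = ∫ v, W k (fun l => v (σ l)) / ∑ l, W l (fun l' => v (σ l')) ∂ν := by
        congr 1 with v
        simp only [hequiv]
        rw [Equiv.sum_comp σ (W · v)]
        simp [σ]
    _ = ∫ v, W k v / ∑ l, W l v ∂ν.map (fun v k => v (σ k)) :=
        (integral_map (measurable_comp_perm σ).aemeasurable
          (measurable_div_sum hmeas k).aestronglyMeasurable).symm
    _ = ∫ v, W k v / ∑ l, W l v ∂ν := by rw [hν σ]

end Exchangeable

section GroupWeight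

variable {𝒵 : Type*}

/-- The paper's `W_k` is `groupWeight A T̃ (N_k, Z_k)`: the fraction of the `N_k` points of
group `k` that satisfy `A · T̃`. -/
def groupWeight (A : 𝒵 → ℝ → Prop) (T : ℝ) (x : ℕ × (ℕ → 𝒵)) : ℝ :=
  (1 / (x.1 : ℝ)) * ∑ i ∈ range x.1, if A (x.2 i) T then 1 else 0

lemma groupWeight_nonneg (A : 𝒵 → ℝ → Prop) (T : ℝ) (x : ℕ × (ℕ → 𝒵)) :
    0 ≤ groupWeight A T x :=
  mul_nonneg (by positivity) (sum_nonneg fun _ _ => by positivity)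

lemma measurable_groupWeight [MeasurableSpace 𝒵] {A : 𝒵 → ℝ → Prop}
    (hA : MeasurableSet {p : 𝒵 × ℝ | A p.1 p.2}) {Y : Type*} [MeasurableSpace Y] {T : Y → ℝ}
    {x : Y → ℕ × (ℕ → 𝒵)}
    (hT : Measurable T) (hx : Measurable x) :
    Measurable fun y => groupWeight A (T y) (x y) := by
  have hsize : ∀ n : ℕ, Measurable fun y => groupWeight A (T y) (n, (x y).2) := fun n => by
    simp only [groupWeight]
    refine Measurable.const_mul (measurable_sum _ fun i _ => ?_) _
    refine Measurable.ite ?_ measurable_const measurable_const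
    exact (((measurable_pi_apply i).comp (measurable_snd.comp hx)).prodMk hT) hA
  have hjoint : Measurable fun q : ℕ × Y => groupWeight A (T q.2) (q.1, (x q.2).2) :=
    measurable_from_prod_countable_right hsize
  simpa only [Function.comp_def, Prod.mk.eta] using
    hjoint.comp ((measurable_fst.comp hx).prodMk measurable_id')

end GroupWeight

theorem group_weighted_sandwich_general
    {Ω 𝒵 : Type*} [MeasurableSpace Ω] [MeasurableSpace 𝒵]
    (μ : Measure Ω) [IsProbabilityMeasure μ] (K : ℕ)
    (N : Fin (K + 1) → Ω → ℕ) (Z : Fin (K + 1) → ℕ → Ω → 𝒵)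
    (hNmeas : ∀ k, Measurable (N k))
    (hZmeas : ∀ k i, Measurable (Z k i))
    (hgroup : ∀ σ : Equiv.Perm (Fin (K + 1)),
      Measure.map (fun ω => fun k => (N (σ k) ω, fun i => Z (σ k) i ω)) μ
        = Measure.map (fun ω => fun k => (N k ω, fun i => Z k i ω)) μ)
    -- a permutation-invariant statistic of the data
    (f : (Fin (K + 1) → ℕ × (ℕ → 𝒵)) → ℝ) (hf : Measurable f)
    (hfsym : ∀ (σ : Equiv.Perm (Fin (K + 1))) (v : Fin (K + 1) → ℕ × (ℕ → 𝒵)),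
      f (fun k => v (σ k)) = f v)
    -- the indicator events, measurable in the data point and the threshold
    (A : 𝒵 → ℝ → Prop) (hA : MeasurableSet {p : 𝒵 × ℝ | A p.1 p.2}) :
    (∫ ω,
        ((1 / (N 0 ω : ℝ)) * ∑ i' ∈ Finset.range (N 0 ω),
          (if A (Z 0 i' ω) (f fun k => (N k ω, fun i => Z k i ω)) then (1 : ℝ) else 0))
        / (∑ k : Fin (K + 1), (1 / (N k ω : ℝ)) * ∑ i' ∈ Finset.range (N k ω),
          (if A (Z k i' ω) (f fun k' => (N k' ω, fun i => Z k' i ω)) then (1 : ℝ) else 0)) ∂μ)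
      ≤ 1 / (K + 1) := by
  let D : Ω → (Fin (K + 1) → ℕ × (ℕ → 𝒵)) := fun ω k => (N k ω, fun i => Z k i ω)
  have hD : Measurable D := measurable_pi_lambda _ fun k =>
    (hNmeas k).prodMk (measurable_pi_lambda _ fun i => hZmeas k i)
  have : IsProbabilityMeasure (μ.map D) := Measure.isProbabilityMeasure_map hD.aemeasurable
  have hexch : ∀ σ : Equiv.Perm (Fin (K + 1)), (μ.map D).map (fun v k => v (σ k)) = μ.map D :=
    fun σ => by rw [Measure.map_map (measurable_comp_perm σ) hD]; exact hgroup σ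
  let W : Fin (K + 1) → (Fin (K + 1) → ℕ × (ℕ → 𝒵)) → ℝ := fun k v => groupWeight A (f v) (v k)
  have hW : ∀ k, Measurable (W k) := fun k => measurable_groupWeight hA hf (measurable_pi_apply k)
  have hequiv : ∀ (σ : Equiv.Perm (Fin (K + 1))) j v, W j (fun l => v (σ l)) = W (σ j) v :=
    fun σ j v => by simp only [W, hfsym σ v]
  calc _ = ∫ v, W 0 v / ∑ l, W l v ∂μ.map D :=
        (integral_map hD.aemeasurable (measurable_div_sum hW 0).aestronglyMeasurable).symm
    _ ≤ 1 / Fintype.card (Fin (K + 1)) :=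
        integral_div_sum_le_inv_card hW (fun k v => groupWeight_nonneg _ _ _)
          (integral_div_sum_eq_of_exchangeable hexch hW hequiv) 0
    _ = 1 / (K + 1) := by simp

/-- sandwich inequality for group-weighted e-values. Let
`Z̃_0, …, Z̃_K` be exchangeable random vectors (exchangeable coordinates given group
sizes, group sizes independent of values), let `T̃ = f(data)` be invariant to
permutations of the groups and within the groups, and
`W_k = (1/N_k) Σ_{i'} 1{A(Z_{k,i'}, T̃)}`. Then
`E[W_0/(Σ_{k=1}^K W_k + W_0)] ≤ 1/(K+1)` (with `0/0 := 0`). -/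
theorem group_weighted_sandwich
    {Ω 𝒵 : Type*} [MeasurableSpace Ω] [MeasurableSpace 𝒵]
    (μ : Measure Ω) [IsProbabilityMeasure μ] (K : ℕ)
    (N : Fin (K + 1) → Ω → ℕ) (Z : Fin (K + 1) → ℕ → Ω → 𝒵)
    (hNpos : ∀ k ω, 0 < N k ω) (hNmeas : ∀ k, Measurable (N k))
    (hZmeas : ∀ k i, Measurable (Z k i))
    (hgroup : ∀ σ : Equiv.Perm (Fin (K + 1)),
      Measure.map (fun ω => fun k => (N (σ k) ω, fun i => Z (σ k) i ω)) μ
        = Measure.map (fun ω => fun k => (N k ω, fun i => Z k i ω)) μ)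
    (hwithin : ∀ (k : Fin (K + 1)) (m : ℕ) (σ : Equiv.Perm (Fin m)),
      Measure.map (fun ω => fun l => (N l ω,
          fun i => Z l (if l = k then extSeq m σ i else i) ω))
          (μ.restrict {ω | N k ω = m})
        = Measure.map (fun ω => fun l => (N l ω, fun i => Z l i ω))
          (μ.restrict {ω | N k ω = m}))
    (hNindep : ∀ k : Fin (K + 1), IndepFun (N k)
        (fun ω => ((fun i => Z k i ω),
          fun l : {l : Fin (K + 1) // l ≠ k} => (N (l : Fin (K + 1)) ω,
            fun i => Z (l : Fin (K + 1)) i ω))) μ)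
    -- a permutation-invariant statistic of the data
    (f : (Fin (K + 1) → ℕ × (ℕ → 𝒵)) → ℝ) (hf : Measurable f)
    (hfsym : ∀ (σ : Equiv.Perm (Fin (K + 1))) (v : Fin (K + 1) → ℕ × (ℕ → 𝒵)),
      f (fun k => v (σ k)) = f v)
    (hfwithin : ∀ (k : Fin (K + 1)) (m : ℕ) (σ : Equiv.Perm (Fin m))
        (v : Fin (K + 1) → ℕ × (ℕ → 𝒵)), (v k).1 = m →
      f (Function.update v k ((v k).1, fun i => (v k).2 (extSeq m σ i))) = f v)
    -- the indicator events, measurable in the data point and the threshold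
    (A : 𝒵 → ℝ → Prop) (hA : MeasurableSet {p : 𝒵 × ℝ | A p.1 p.2}) :
    (∫ ω,
        ((1 / (N 0 ω : ℝ)) * ∑ i' ∈ Finset.range (N 0 ω),
          (if A (Z 0 i' ω) (f fun k => (N k ω, fun i => Z k i ω)) then (1 : ℝ) else 0))
        / (∑ k : Fin (K + 1), (1 / (N k ω : ℝ)) * ∑ i' ∈ Finset.range (N k ω),
          (if A (Z k i' ω) (f fun k' => (N k' ω, fun i => Z k' i ω)) then (1 : ℝ) else 0)) ∂μ)
      ≤ 1 / (K + 1) :=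
  group_weighted_sandwich_general μ K N Z hNmeas hZmeas hgroup f hf hfsym A hA
end
end

section
/- Weighted exchangeability e-value bound: let (G_0,Z_0), (G_1,Z_1), ..., (G_K,Z_K) be independent with (G_k,Z_k) ~ P for k ≥ 1 and (G_0,Z_0) drawn from the tilted distribution with density w(g) with respect to P (where w = dP̃_G/dP_G depends only on g). Let T be a statistic depending only on the unordered multiset {(G_0,Z_0),...,(G_K,Z_K)} (and possibly independent auxiliary data). Define p_k = w(G_k)/(Σ_{l=0}^K w(G_l)) and indicator events A_k depending on (G_k,Z_k) and T. Then E[ 1{A_0} / (Σ_{k=0}^K p_k · 1{A_k}) ] ≤ 1, with 0/0 := 0. -/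
open MeasureTheory ProbabilityTheory Finset
open scoped ENNReal Classical

noncomputable section

/-!
Write `g = w ∘ fst` for the tilt. By independence, the law of `(GZ_0, …, GZ_K)` is the
product measure `P^{K+1}` with density `g(v_0)`, so the expectation equals
`∫ g(v_0) · 1{A_0}/D(v) dP^{K+1}`, where `D(v) = Σ_k p_k(v) 1{A_k}(v)` is symmetric in `v`.
Relabelling the points by the transposition `(0 j)` preserves `P^{K+1}`, hence the same
integral is obtained with `0` replaced by any `j`. Averaging over `j`, the integrand becomes
`Σ_j g(v_j) 1{A_j}/D(v) = S/(S/W) ≤ W`, where `W = Σ_j g(v_j)` and `S = Σ_j g(v_j) 1{A_j}`,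
and `∫ W dP^{K+1} = K + 1`.
-/

/-- The paper's convention `0/0 := 0` is Lean's `x / 0 = 0`. -/
def weightedRatio {ι : Type*} [Fintype ι] (w a : ι → ℝ) (j : ι) : ℝ :=
  a j / ∑ k, w k / (∑ l, w l) * a k

section weightedRatio

variable {ι : Type*} [Fintype ι]

theorem weightedRatio_nonneg {w a : ι → ℝ} (hw : ∀ k, 0 ≤ w k) (ha : ∀ k, 0 ≤ a k) (j : ι) :
    0 ≤ weightedRatio w a j :=
  div_nonneg (ha j) <| Finset.sum_nonneg fun k _ =>
    mul_nonneg (div_nonneg (hw k) (Finset.sum_nonneg fun l _ => hw l)) (ha k)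

theorem weightedRatio_comp_perm (w a : ι → ℝ) (σ : Equiv.Perm ι) (j : ι) :
    weightedRatio (w ∘ σ) (a ∘ σ) j = weightedRatio w a (σ j) := by
  simp only [weightedRatio, Function.comp_apply, Equiv.sum_comp σ (fun l => w l),
    Equiv.sum_comp σ (fun k => w k / (∑ l, w l) * a k)]

theorem sum_mul_weightedRatio_le (w a : ι → ℝ) (hW : 0 ≤ ∑ l, w l) :
    ∑ j, w j * weightedRatio w a j ≤ ∑ l, w l := by
  have hden : ∑ k, w k / (∑ l, w l) * a k = (∑ k, w k * a k) / ∑ l, w l := by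
    rw [Finset.sum_div]
    exact Finset.sum_congr rfl fun k _ => div_mul_eq_mul_div _ _ _
  simp only [weightedRatio, hden, ← mul_div_assoc, ← Finset.sum_div]
  rcases eq_or_ne (∑ k, w k * a k) 0 with hS | hS
  · simpa [hS] using hW
  · rw [div_div_cancel₀ hS]

theorem sum_ofReal_mul_ofReal_weightedRatio_le {w a : ι → ℝ} (hw : ∀ k, 0 ≤ w k)
    (ha : ∀ k, 0 ≤ a k) :
    ∑ j, ENNReal.ofReal (w j) * ENNReal.ofReal (weightedRatio w a j)
      ≤ ∑ j, ENNReal.ofReal (w j) := by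
  simp only [← ENNReal.ofReal_mul (hw _)]
  rw [← ENNReal.ofReal_sum_of_nonneg fun j _ => mul_nonneg (hw j) (weightedRatio_nonneg hw ha j),
    ← ENNReal.ofReal_sum_of_nonneg fun j _ => hw j]
  exact ENNReal.ofReal_le_ofReal <|
    sum_mul_weightedRatio_le _ _ (Finset.sum_nonneg fun l _ => hw l)

theorem Measurable.weightedRatio {α : Type*} [MeasurableSpace α] {w a : α → ι → ℝ}
    (hw : ∀ k, Measurable fun x => w x k) (ha : ∀ k, Measurable fun x => a x k) (j : ι) :
    Measurable fun x => weightedRatio (w x) (a x) j := by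
  unfold _root_.weightedRatio
  fun_prop

end weightedRatio

theorem Set.indicator_univ_pi_prod {ι M : Type*} [Fintype ι] {α : ι → Type*}
    [CommMonoidWithZero M] (s : ∀ i, Set (α i)) (h : ∀ i, α i → M) (v : ∀ i, α i) :
    (Set.univ.pi s).indicator (fun v => ∏ i, h i (v i)) v
      = ∏ i, (s i).indicator (h i) (v i) := by
  by_cases hv : v ∈ Set.univ.pi s
  · rw [Set.indicator_of_mem hv]
    exact Finset.prod_congr rfl fun i _ => (Set.indicator_of_mem (hv i trivial) _).symm
  · obtain ⟨i, hi⟩ : ∃ i, v i ∉ s i := by simpa [Set.mem_univ_pi] using hv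
    rw [Set.indicator_of_notMem hv, eq_comm]
    exact Finset.prod_eq_zero (Finset.mem_univ i) (Set.indicator_of_notMem hi _)

namespace MeasureTheory

variable {ι : Type*} [Fintype ι]

theorem Measure.pi_withDensity {α : ι → Type*} [∀ i, MeasurableSpace (α i)]
    (μ : ∀ i, Measure (α i)) [∀ i, IsProbabilityMeasure (μ i)] (h : ∀ i, α i → ℝ≥0∞)
    (hh : ∀ i, Measurable (h i)) [∀ i, SigmaFinite ((μ i).withDensity (h i))] :
    Measure.pi (fun i => (μ i).withDensity (h i))
      = (Measure.pi μ).withDensity fun v => ∏ i, h i (v i) := by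
  refine Measure.pi_eq (μ := fun i => (μ i).withDensity (h i)) fun s hs => ?_
  have hind : ∀ i, Measurable ((s i).indicator (h i)) := fun i => (hh i).indicator (hs i)
  rw [withDensity_apply' _, ← lintegral_indicator (.univ_pi hs)]
  simp only [Set.indicator_univ_pi_prod]
  rw [lintegral_prod_eq_prod_lintegral_of_indepFun _ _
      (iIndepFun_pi fun i => (hind i).aemeasurable)
      fun i => (hind i).comp (measurable_pi_apply i)]
  refine Finset.prod_congr rfl fun i _ => ?_
  rw [(measurePreserving_eval μ i).lintegral_comp (hind i), lintegral_indicator (hs i),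
    withDensity_apply _ (hs i)]

theorem measurePreserving_comp_perm {α : Type*} [MeasurableSpace α] (P : Measure α)
    [SigmaFinite P] (σ : Equiv.Perm ι) :
    MeasurePreserving (fun v : ι → α => v ∘ σ)
      (Measure.pi fun _ => P) (Measure.pi fun _ => P) := by
  convert measurePreserving_piCongrLeft (fun _ : ι => P) σ.symm using 1
  ext v i
  simp [MeasurableEquiv.coe_piCongrLeft, Equiv.piCongrLeft_apply]

theorem lintegral_withDensity_eval_le_one_of_equivariant {α : Type*} [MeasurableSpace α]
    (P : Measure α) [IsProbabilityMeasure P] (g : α → ℝ≥0∞) (hg : Measurable g)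
    (hg_one : ∫⁻ x, g x ∂P = 1) (E : (ι → α) → ι → ℝ≥0∞)
    (hE : ∀ j, Measurable fun v => E v j)
    (hE_perm : ∀ (σ : Equiv.Perm ι) v j, E (v ∘ σ) j = E v (σ j))
    (hE_bound : ∀ v, ∑ j, g (v j) * E v j ≤ ∑ j, g (v j)) (i : ι) :
    ∫⁻ v, E v i ∂(Measure.pi fun _ => P).withDensity (fun v => g (v i)) ≤ 1 := by
  set L := ∫⁻ v, E v i ∂(Measure.pi fun _ => P).withDensity (fun v => g (v i)) with hL_def
  have hgm : ∀ j, Measurable fun v : ι → α => g (v j) :=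
    fun j => hg.comp (measurable_pi_apply j)
  have hL : ∀ j, ∫⁻ v, g (v j) * E v j ∂Measure.pi (fun _ => P) = L := fun j => by
    rw [hL_def, lintegral_withDensity_eq_lintegral_mul _ (hgm i) (hE i),
      ← (measurePreserving_comp_perm P (Equiv.swap i j)).lintegral_comp ((hgm i).mul (hE i))]
    simp [hE_perm]
  have hcard : (Fintype.card ι : ℝ≥0∞) * L ≤ Fintype.card ι * 1 := calc
    (Fintype.card ι : ℝ≥0∞) * L = ∑ j, ∫⁻ v, g (v j) * E v j ∂Measure.pi (fun _ => P) := by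
        simp [hL]
    _ = ∫⁻ v, ∑ j, g (v j) * E v j ∂Measure.pi (fun _ => P) :=
        (lintegral_finsetSum _ fun j _ => (hgm j).mul (hE j)).symm
    _ ≤ ∫⁻ v, ∑ j, g (v j) ∂Measure.pi (fun _ => P) := lintegral_mono hE_bound
    _ = ∑ j, ∫⁻ v, g (v j) ∂Measure.pi (fun _ => P) := lintegral_finsetSum _ fun j _ => hgm j
    _ = Fintype.card ι * 1 := by
        simp [(measurePreserving_eval (fun _ => P) _).lintegral_comp hg, hg_one]
  have : Nonempty ι := ⟨i⟩
  exact (ENNReal.mul_le_mul_iff_right (by simp) (by simp)).mp hcard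

end MeasureTheory

theorem ProbabilityTheory.iIndepFun.map_fun_eq_pi_withDensity {Ω ι α : Type*}
    [MeasurableSpace Ω] [MeasurableSpace α] [Fintype ι] {μ : Measure Ω} {X : ι → Ω → α}
    (hX : ∀ i, Measurable (X i)) (hind : iIndepFun X μ)
    {P : Measure α} [IsProbabilityMeasure P]
    {g : α → ℝ≥0∞} (hg : Measurable g) (i : ι) (hlaw_i : μ.map (X i) = P.withDensity g)
    (hlaw : ∀ k, k ≠ i → μ.map (X k) = P) :
    μ.map (fun ω k => X k ω) = (Measure.pi fun _ => P).withDensity fun v => g (v i) := by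
  have hν : ∀ k, μ.map (X k) = P.withDensity (if k = i then g else 1) := fun k => by
    split_ifs with hk
    · exact hk ▸ hlaw_i
    · rw [withDensity_one, hlaw k hk]
  have := hind.isProbabilityMeasure
  have : ∀ k, SigmaFinite (P.withDensity (if k = i then g else 1)) := fun k => by
    rw [← hν k]
    infer_instance
  rw [hind.map_fun_eq_pi_map fun k => (hX k).aemeasurable, funext hν,
    Measure.pi_withDensity _ _ fun k => by split_ifs; exacts [hg, measurable_const]]
  congr with v
  simp [ite_apply]

/-- weighted exchangeability e-value bound. Let
`(G_0,Z_0), …, (G_K,Z_K)` be independent, with `(G_k,Z_k) ∼ P` for `k ≥ 1` and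
`(G_0,Z_0)` drawn from the `w`-tilted distribution (density `w(g)` w.r.t. `P`). If `T`
depends only on the unordered multiset of the points, then with
`p_k = w(G_k)/Σ_l w(G_l)` and events `A_k = A((G_k,Z_k), T)`,
`E[1{A_0} / (Σ_k p_k 1{A_k})] ≤ 1` (with `0/0 := 0`). -/
theorem weighted_exchangeability_evalue
    {Ω 𝒢 𝒵 : Type*} [MeasurableSpace Ω] [MeasurableSpace 𝒢] [MeasurableSpace 𝒵]
    (μ : Measure Ω) [IsProbabilityMeasure μ] (K : ℕ)
    (P : Measure (𝒢 × 𝒵)) [IsProbabilityMeasure P]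
    (w : 𝒢 → ℝ) (hw_nn : ∀ g, 0 ≤ w g) (hw_meas : Measurable w)
    (GZ : Fin (K + 1) → Ω → 𝒢 × 𝒵) (hGZ : ∀ k, Measurable (GZ k))
    (hindep : iIndepFun GZ μ)
    (hlaw0 : Measure.map (GZ 0) μ = P.withDensity fun p => ENNReal.ofReal (w p.1))
    (hlaw : ∀ k : Fin (K + 1), k ≠ 0 → Measure.map (GZ k) μ = P)
    -- `T` is a symmetric (multiset) function of the K+1 points
    (f : (Fin (K + 1) → 𝒢 × 𝒵) → ℝ) (hf : Measurable f)
    (hsym : ∀ (σ : Equiv.Perm (Fin (K + 1))) (v : Fin (K + 1) → 𝒢 × 𝒵),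
      f (fun k => v (σ k)) = f v)
    (A : 𝒢 × 𝒵 → ℝ → Prop) (hA : MeasurableSet {p : (𝒢 × 𝒵) × ℝ | A p.1 p.2}) :
    (∫ ω,
        (if A (GZ 0 ω) (f fun k => GZ k ω) then (1 : ℝ) else 0)
        / (∑ k : Fin (K + 1),
            (w (GZ k ω).1 / ∑ l : Fin (K + 1), w (GZ l ω).1) *
              (if A (GZ k ω) (f fun k' => GZ k' ω) then (1 : ℝ) else 0)) ∂μ)
      ≤ 1 := by
  let wt (v : Fin (K + 1) → 𝒢 × 𝒵) (k : Fin (K + 1)) : ℝ := w (v k).1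
  let ind (v : Fin (K + 1) → 𝒢 × 𝒵) (k : Fin (K + 1)) : ℝ := if A (v k) (f v) then 1 else 0
  let E v j := ENNReal.ofReal (weightedRatio (wt v) (ind v) j)
  have hg : Measurable fun p : 𝒢 × 𝒵 => ENNReal.ofReal (w p.1) := by fun_prop
  have hX : Measurable fun ω k => GZ k ω := measurable_pi_lambda _ hGZ
  have hR : ∀ j, Measurable fun v => weightedRatio (wt v) (ind v) j :=
    Measurable.weightedRatio (fun k => by fun_prop) fun k =>
      Measurable.ite (hA.preimage ((measurable_pi_apply k).prodMk hf))
        measurable_const measurable_const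
  have hE : ∀ j, Measurable fun v => E v j := fun j => (hR j).ennreal_ofReal
  have hE_perm : ∀ (σ : Equiv.Perm (Fin (K + 1))) v j, E (v ∘ σ) j = E v (σ j) := by
    intro σ v j
    simp only [E, ← weightedRatio_comp_perm]
    congr 2
    ext k
    simp only [ind, Function.comp_def, hsym]
  have hind : ∀ v k, 0 ≤ ind v k := fun v k => by simp only [ind]; positivity
  have hE_bound :
      ∀ v, ∑ j, ENNReal.ofReal (w (v j).1) * E v j ≤ ∑ j, ENNReal.ofReal (w (v j).1) :=
    fun v => sum_ofReal_mul_ofReal_weightedRatio_le (fun k => hw_nn _) (hind v)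
  have hg_one : ∫⁻ p, ENNReal.ofReal (w p.1) ∂P = 1 := by
    have := Measure.isProbabilityMeasure_map (hGZ 0).aemeasurable (μ := μ)
    rw [← setLIntegral_univ, ← withDensity_apply _ .univ, ← hlaw0, measure_univ]
  have hbound := lintegral_withDensity_eval_le_one_of_equivariant P _ hg hg_one E hE hE_perm
    hE_bound 0
  rw [← hindep.map_fun_eq_pi_withDensity hGZ hg 0 hlaw0 hlaw,
    lintegral_map (hE 0) hX] at hbound
  change ∫ ω, weightedRatio (wt fun k => GZ k ω) (ind fun k => GZ k ω) 0 ∂μ ≤ 1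
  rw [integral_eq_lintegral_of_nonneg_ae
    (.of_forall fun ω => weightedRatio_nonneg (fun k => hw_nn _) (hind _) 0)
    ((hR 0).comp hX).aestronglyMeasurable]
  exact ENNReal.toReal_le_of_le_ofReal zero_le_one (by simpa using hbound)
end
end

section
/- Equality of conditional expectations under within-group identical distribution: suppose conditional on the group-size vector N_{K+1:K+M}, the random variables e_{j,1} 1{H_{j,1}}, ..., e_{j,N_{K+j}} 1{H_{j,N_{K+j}}} are identically distributed, and each e_{j,i} is conditionally independent of N_{K+j} given the other group sizes N_{-(K+j)}. Then E[e_{j,i} 1{H_{j,i}} | N_{K+1:K+M}] = E[(1/N_{K+j}) Σ_{i'=1}^{N_{K+j}} e_{j,i'} 1{H_{j,i'}} | N_{-(K+j)}] for every i ∈ [N_{K+j}]. -/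
open MeasureTheory ProbabilityTheory Finset
open scoped Classical

noncomputable section

/-!
Write `f i = e_{j,i} 1{H_{j,i}}`, `G = σ(N)` and `G' = σ(N_{-j})`. The events `{N_j = m}` are
`G`-measurable, and on each of them the `f i` with `i < m` have the same conditional law given
`G`; hence `E[f i | G] = E[f 0 | G]` there, and the group average `(1/m) ∑_{i<m} f i` has the
same integral as `f 0` over every `B ∩ {N_j = m}` with `B ∈ G`. Summing over `m ≥ 1` gives
`∫_B avg = ∫_B f 0` for all `B ∈ G ⊇ G'`, so `E[avg | G'] = E[f 0 | G']`, and conditional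
independence `E[f 0 | G] = E[f 0 | G']` joins the two. The same fibrewise comparison, applied to
`‖f i‖`, bounds `∫ ‖avg‖` by `∫ ‖f 0‖`.
-/

def groupAverage {Ω : Type*} (K : Ω → ℕ) (f : ℕ → Ω → ℝ) (ω : Ω) : ℝ :=
  1 / (K ω : ℝ) * ∑ i ∈ range (K ω), f i ω

section

variable {Ω : Type*} {K : Ω → ℕ} {f : ℕ → Ω → ℝ}

lemma groupAverage_of_eq {ω : Ω} {m : ℕ} (h : K ω = m) :
    groupAverage K f ω = 1 / (m : ℝ) * ∑ i ∈ range m, f i ω := by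
  rw [groupAverage, h]

lemma norm_groupAverage_le (ω : Ω) :
    ‖groupAverage K f ω‖ ≤ groupAverage K (fun i ω => ‖f i ω‖) ω := by
  rw [groupAverage, groupAverage, norm_mul, Real.norm_of_nonneg (by positivity)]
  gcongr
  exact norm_sum_le _ _

end

def WithinGroupIdentDistrib {Ω α : Type*} [MeasurableSpace α] (G : MeasurableSpace Ω)
    [MeasurableSpace Ω] (K : Ω → ℕ) (f : ℕ → Ω → α) (μ : Measure Ω) : Prop :=
  ∀ ⦃m i i' : ℕ⦄, i < m → i' < m → ∀ ⦃B : Set Ω⦄, MeasurableSet[G] B →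
    IdentDistrib (f i) (f i') (μ.restrict (B ∩ K ⁻¹' {m})) (μ.restrict (B ∩ K ⁻¹' {m}))

section

variable {Ω : Type*} {G G' : MeasurableSpace Ω} [mΩ : MeasurableSpace Ω] {μ : Measure Ω}

section

variable {β : Type*} [Countable β] [MeasurableSpace β] [MeasurableSingletonClass β]
  {E : Type*} [NormedAddCommGroup E] [NormedSpace ℝ E]

lemma setIntegral_eq_tsum_fiber {K : Ω → β} (hK : Measurable K) {B : Set Ω}
    (hB : MeasurableSet B) {g : Ω → E} (hg : IntegrableOn g B μ) :
    ∫ ω in B, g ω ∂μ = ∑' b, ∫ ω in B ∩ K ⁻¹' {b}, g ω ∂μ := by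
  have hcover : ⋃ b, B ∩ K ⁻¹' {b} = B := by
    rw [← Set.inter_iUnion, Set.iUnion_eq_univ_iff.2 fun ω => ⟨K ω, rfl⟩, Set.inter_univ]
  have h := integral_iUnion (fun b => hB.inter (hK (measurableSet_singleton b)))
    (fun b b' hbb' => ((pairwise_disjoint_fiber K) hbb').mono Set.inter_subset_right
      Set.inter_subset_right) (hcover ▸ hg)
  rwa [hcover] at h

end

lemma condExp_ae_eq_of_forall_setIntegral_eq {E : Type*} [NormedAddCommGroup E]
    [NormedSpace ℝ E] [CompleteSpace E] (hG : G ≤ mΩ) [SigmaFinite (μ.trim hG)]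
    {f g : Ω → E} (hf : Integrable f μ) (hg : Integrable g μ)
    (hfg : ∀ s, MeasurableSet[G] s → ∫ ω in s, f ω ∂μ = ∫ ω in s, g ω ∂μ) :
    μ[f|G] =ᵐ[μ] μ[g|G] :=
  ae_eq_condExp_of_forall_setIntegral_eq hG hg (fun _ _ _ => integrable_condExp.integrableOn)
    (fun s hs _ => by rw [setIntegral_condExp hG hf hs, hfg s hs])
    stronglyMeasurable_condExp.aestronglyMeasurable

section

variable {K : Ω → ℕ}

lemma withinGroupIdentDistrib_of_measure_inter_eq {α : Type*} [MeasurableSpace α]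
    {f : ℕ → Ω → α} (hf : ∀ i, Measurable (f i))
    (h : ∀ (i i' m : ℕ), i < m → i' < m → ∀ (s : Set α), MeasurableSet s →
      ∀ B : Set Ω, MeasurableSet[G] B →
        μ (B ∩ {ω | K ω = m ∧ f i ω ∈ s}) = μ (B ∩ {ω | K ω = m ∧ f i' ω ∈ s})) :
    WithinGroupIdentDistrib G K f μ := by
  intro m i i' hi hi' B hB
  refine ⟨(hf i).aemeasurable, (hf i').aemeasurable, Measure.ext fun s hs => ?_⟩
  rw [Measure.map_apply (hf i) hs, Measure.map_apply (hf i') hs,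
    Measure.restrict_apply (hf i hs), Measure.restrict_apply (hf i' hs),
    Set.inter_comm, Set.inter_assoc, Set.inter_comm (f i' ⁻¹' s), Set.inter_assoc]
  exact h i i' m hi hi' s hs B hB

variable {E : Type*} [NormedAddCommGroup E] [NormedSpace ℝ E] [CompleteSpace E]
  [MeasurableSpace E] [BorelSpace E] {f : ℕ → Ω → E}

lemma indicator_condExp_ae_eq_of_withinGroupIdentDistrib (hG : G ≤ mΩ)
    [SigmaFinite (μ.trim hG)] (hK : Measurable[G] K) (hf : WithinGroupIdentDistrib G K f μ)
    (hint : ∀ i, Integrable (f i) μ) {m i i' : ℕ} (hi : i < m) (hi' : i' < m) :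
    (K ⁻¹' {m}).indicator (μ[f i|G]) =ᵐ[μ] (K ⁻¹' {m}).indicator (μ[f i'|G]) := by
  have hA : MeasurableSet[G] (K ⁻¹' {m}) := hK (measurableSet_singleton m)
  calc (K ⁻¹' {m}).indicator (μ[f i|G])
      =ᵐ[μ] μ[(K ⁻¹' {m}).indicator (f i)|G] := (condExp_indicator (hint i) hA).symm
    _ =ᵐ[μ] μ[(K ⁻¹' {m}).indicator (f i')|G] := by
      refine condExp_ae_eq_of_forall_setIntegral_eq hG ((hint i).indicator (hG _ hA))
        ((hint i').indicator (hG _ hA)) fun B hB => ?_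
      rw [setIntegral_indicator (hG _ hA), setIntegral_indicator (hG _ hA)]
      exact (hf hi hi' hB).integral_eq
    _ =ᵐ[μ] (K ⁻¹' {m}).indicator (μ[f i'|G]) := condExp_indicator (hint i') hA

lemma ae_condExp_eq_of_withinGroupIdentDistrib (hG : G ≤ mΩ)
    [SigmaFinite (μ.trim hG)] (hK : Measurable[G] K) (hf : WithinGroupIdentDistrib G K f μ)
    (hint : ∀ i, Integrable (f i) μ) (i i' : ℕ) :
    ∀ᵐ ω ∂μ, i < K ω → i' < K ω → μ[f i|G] ω = μ[f i'|G] ω := by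
  have h : ∀ᵐ ω ∂μ, ∀ m, i < m → i' < m →
      (K ⁻¹' {m}).indicator (μ[f i|G]) ω = (K ⁻¹' {m}).indicator (μ[f i'|G]) ω :=
    ae_all_iff.2 fun m => Filter.eventually_imp_distrib_left.2 fun hi =>
      Filter.eventually_imp_distrib_left.2 fun hi' =>
        indicator_condExp_ae_eq_of_withinGroupIdentDistrib hG hK hf hint hi hi'
  filter_upwards [h] with ω hω hi hi'
  simpa using hω (K ω) hi hi'

end

lemma integral_average_eq_of_identDistrib {ν : Measure Ω} {g : ℕ → Ω → ℝ} {h : Ω → ℝ}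
    {m : ℕ} (hm : m ≠ 0) (hg : ∀ i < m, IdentDistrib (g i) h ν ν) (hh : Integrable h ν) :
    ∫ ω, 1 / (m : ℝ) * ∑ i ∈ range m, g i ω ∂ν = ∫ ω, h ω ∂ν := by
  rw [integral_const_mul,
    integral_finsetSum _ fun i hi => (hg i (mem_range.1 hi)).integrable_iff.2 hh,
    sum_congr rfl fun i hi => (hg i (mem_range.1 hi)).integral_eq, sum_const, card_range,
    nsmul_eq_mul]
  field_simp

section

variable {K : Ω → ℕ} {f : ℕ → Ω → ℝ}

lemma setIntegral_groupAverage_fiber (hf : WithinGroupIdentDistrib G K f μ)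
    (hint : Integrable (f 0) μ) {B : Set Ω} (hB : MeasurableSet[G] B) {m : ℕ}
    (hBm : MeasurableSet (B ∩ K ⁻¹' {m})) (hm : m ≠ 0) :
    ∫ ω in B ∩ K ⁻¹' {m}, groupAverage K f ω ∂μ = ∫ ω in B ∩ K ⁻¹' {m}, f 0 ω ∂μ := by
  rw [setIntegral_congr_fun hBm fun ω hω => groupAverage_of_eq hω.2]
  exact integral_average_eq_of_identDistrib hm
    (fun i hi => hf hi (Nat.pos_of_ne_zero hm) hB) hint.integrableOn

lemma integrableOn_groupAverage_fiber (hK : Measurable K) (hint : ∀ i, Integrable (f i) μ)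
    (m : ℕ) : IntegrableOn (groupAverage K f) (K ⁻¹' {m}) μ :=
  ((integrable_finsetSum _ fun i _ => hint i).const_mul _).integrableOn.congr_fun
    (fun _ hω => (groupAverage_of_eq hω).symm) (hK (measurableSet_singleton m))

lemma integrable_groupAverage (hK : Measurable K) (hf : WithinGroupIdentDistrib G K f μ)
    (hint : ∀ i, Integrable (f i) μ) : Integrable (groupAverage K f) μ := by
  have hfib : ∀ m, MeasurableSet (K ⁻¹' {m}) := fun m => hK (measurableSet_singleton m)
  have hnorm : WithinGroupIdentDistrib G K (fun i ω => ‖f i ω‖) μ :=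
    fun _ _ _ hi hi' _ hB => (hf hi hi' hB).comp measurable_norm
  have hbound : ∀ m, ∫ ω in K ⁻¹' {m}, ‖groupAverage K f ω‖ ∂μ
      ≤ ∫ ω in K ⁻¹' {m}, ‖f 0 ω‖ ∂μ := by
    intro m
    rcases eq_or_ne m 0 with rfl | hm
    · have hzero : ∀ ω ∈ K ⁻¹' {0}, ‖groupAverage K f ω‖ = 0 := fun ω hω => by
        simp [groupAverage_of_eq hω]
      rw [setIntegral_congr_fun (hfib 0) hzero, integral_zero]
      exact integral_nonneg fun _ => norm_nonneg _
    calc ∫ ω in K ⁻¹' {m}, ‖groupAverage K f ω‖ ∂μ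
        ≤ ∫ ω in K ⁻¹' {m}, groupAverage K (fun i ω => ‖f i ω‖) ω ∂μ :=
          setIntegral_mono_on (integrableOn_groupAverage_fiber hK hint m).norm
            (integrableOn_groupAverage_fiber hK (fun i => (hint i).norm) m) (hfib m)
            fun ω _ => norm_groupAverage_le ω
      _ = ∫ ω in K ⁻¹' {m}, ‖f 0 ω‖ ∂μ := by
          simpa using setIntegral_groupAverage_fiber hnorm (hint 0).norm MeasurableSet.univ
            (by simpa using hfib m) hm
  have hcover : ⋃ m, K ⁻¹' {m} = Set.univ := Set.iUnion_eq_univ_iff.2 fun ω => ⟨K ω, rfl⟩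
  rw [← integrableOn_univ, ← hcover]
  exact integrableOn_iUnion_of_summable_integral_norm (integrableOn_groupAverage_fiber hK hint)
    (Summable.of_nonneg_of_le (fun _ => integral_nonneg fun _ => norm_nonneg _) hbound
      (hasSum_integral_iUnion hfib (pairwise_disjoint_fiber K) (hint 0).norm.integrableOn).summable)

lemma setIntegral_groupAverage (hG : G ≤ mΩ) (hK : Measurable K) (hK_pos : ∀ ω, 0 < K ω)
    (hf : WithinGroupIdentDistrib G K f μ) (hint : ∀ i, Integrable (f i) μ) {B : Set Ω}
    (hB : MeasurableSet[G] B) :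
    ∫ ω in B, groupAverage K f ω ∂μ = ∫ ω in B, f 0 ω ∂μ := by
  rw [setIntegral_eq_tsum_fiber hK (hG _ hB) (integrable_groupAverage hK hf hint).integrableOn,
    setIntegral_eq_tsum_fiber hK (hG _ hB) (hint 0).integrableOn]
  refine tsum_congr fun m => ?_
  rcases eq_or_ne m 0 with rfl | hm
  · have hempty : K ⁻¹' {0} = ∅ := Set.eq_empty_of_forall_notMem fun ω hω => (hK_pos ω).ne' hω
    simp [hempty]
  exact setIntegral_groupAverage_fiber hf (hint 0) hB
    ((hG _ hB).inter (hK (measurableSet_singleton m))) hm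

lemma condExp_groupAverage_ae_eq (hG' : G' ≤ G) (hG : G ≤ mΩ)
    [SigmaFinite (μ.trim (hG'.trans hG))] (hK : Measurable K) (hK_pos : ∀ ω, 0 < K ω)
    (hf : WithinGroupIdentDistrib G K f μ) (hint : ∀ i, Integrable (f i) μ) :
    μ[groupAverage K f|G'] =ᵐ[μ] μ[f 0|G'] :=
  condExp_ae_eq_of_forall_setIntegral_eq (hG'.trans hG) (integrable_groupAverage hK hf hint)
    (hint 0) fun _ hs => setIntegral_groupAverage hG hK hK_pos hf hint (hG' _ hs)

end

end

/-- equality of conditional expectations under within-group identical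
distribution. If, conditionally on the group-size vector `N_{K+1:K+M}`, the variables
`e_{j,1}1{H_{j,1}}, …, e_{j,N_{K+j}}1{H_{j,N_{K+j}}}` are identically distributed, and
each `e_{j,i}1{H_{j,i}}` is conditionally independent of `N_{K+j}` given the other
group sizes `N_{-(K+j)}` (expressed by equality of the conditional expectations given
`σ(N)` and `σ(N_{-(K+j)})`), then
`E[e_{j,i}1{H_{j,i}} | N_{K+1:K+M}] = E[(1/N_{K+j}) Σ_{i'} e_{j,i'}1{H_{j,i'}} | N_{-(K+j)}]`
for every `i ∈ [N_{K+j}]`. -/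
theorem condexp_within_group_average {Ω : Type*} [mΩ : MeasurableSpace Ω]
    (μ : Measure Ω) [IsProbabilityMeasure μ] (M : ℕ) (j : Fin M)
    (N : Fin M → Ω → ℕ) (hNmeas : ∀ l, Measurable (N l)) (hNpos : ∀ l ω, 0 < N l ω)
    (e : ℕ → Ω → ℝ) (H : ℕ → Ω → Prop)
    (hmeas : ∀ i, Measurable fun ω => e i ω * (if H i ω then (1 : ℝ) else 0))
    (hint : ∀ i, Integrable (fun ω => e i ω * (if H i ω then (1 : ℝ) else 0)) μ)
    -- within-group identical distribution, conditionally on the group sizes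
    (hid : ∀ (i i' m : ℕ), i < m → i' < m → ∀ (s : Set ℝ), MeasurableSet s →
      ∀ B : Set Ω,
        MeasurableSet[MeasurableSpace.comap (fun ω => fun l : Fin M => N l ω)
          inferInstance] B →
        μ (B ∩ {ω | N j ω = m ∧ e i ω * (if H i ω then (1 : ℝ) else 0) ∈ s})
          = μ (B ∩ {ω | N j ω = m ∧ e i' ω * (if H i' ω then (1 : ℝ) else 0) ∈ s}))
    -- conditional independence of each `e_{j,i}1{H_{j,i}}` from `N_{K+j}` given
    -- the other group sizes
    (hci : ∀ i : ℕ,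
      μ[fun ω => e i ω * (if H i ω then (1 : ℝ) else 0)
          | MeasurableSpace.comap (fun ω => fun l : Fin M => N l ω) inferInstance]
        =ᵐ[μ]
      μ[fun ω => e i ω * (if H i ω then (1 : ℝ) else 0)
          | MeasurableSpace.comap (fun ω => fun l : {l : Fin M // l ≠ j} => N (l : Fin M) ω)
            inferInstance]) :
    ∀ i : ℕ, ∀ᵐ ω ∂μ, i < N j ω →
      (μ[fun ω' => e i ω' * (if H i ω' then (1 : ℝ) else 0)
          | MeasurableSpace.comap (fun ω' => fun l : Fin M => N l ω') inferInstance]) ω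
        =
      (μ[fun ω' => (1 / (N j ω' : ℝ)) * ∑ i' ∈ Finset.range (N j ω'),
            e i' ω' * (if H i' ω' then (1 : ℝ) else 0)
          | MeasurableSpace.comap (fun ω' => fun l : {l : Fin M // l ≠ j} => N (l : Fin M) ω')
            inferInstance]) ω := by
  intro i
  have hG : MeasurableSpace.comap (fun ω => fun l : Fin M => N l ω) inferInstance ≤ mΩ :=
    (measurable_pi_lambda _ hNmeas).comap_le
  have hNG : ∀ l, Measurable[MeasurableSpace.comap (fun ω => fun l : Fin M => N l ω)
      inferInstance] (N l) := fun l =>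
    Measurable.of_comap_le (MeasurableSpace.comap_le_comap_of_eq_comp _ (measurable_pi_apply l) rfl)
  have hG' := MeasurableSpace.comap_le_comap_of_eq_comp (f := fun ω (l : Fin M) => N l ω)
    (g := fun ω (l : {l : Fin M // l ≠ j}) => N l ω) _
    (measurable_pi_lambda _ fun l => measurable_pi_apply l.1) rfl
  have hf := withinGroupIdentDistrib_of_measure_inter_eq
    (f := fun i ω => e i ω * (if H i ω then (1 : ℝ) else 0)) hmeas hid
  filter_upwards [ae_condExp_eq_of_withinGroupIdentDistrib hG (hNG j) hf hint i 0, hci 0,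
    condExp_groupAverage_ae_eq hG' hG (hNmeas j) (hNpos j) hf hint] with ω hsame hcond havg hi
  exact (hsame hi (hNpos j ω)).trans (hcond.trans havg.symm)
end
end
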